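/- arXiv:2111.05156 — 10 statements merged into one kernel-verified Lean document; each statement's English description precedes it below -/
import Mathlib

section
/- Let N ≥ 1, k ≥ 1, T > 0, β > 0, L > 0. Suppose F : ℝ^N → ℝ^N satisfies ‖F(y)‖ ≤ L(1 + ‖y‖) for all y, and suppose x : ℝ → ℝ^N and v_1, …, v_k : ℝ → ℝ^N are such that ‖v_j(t)‖ = 1 for all t ∈ [0,T] and 1 ≤ j ≤ k, x is differentiable on [0,T], and x'(t) = β (I - 2 ∑_{j=1}^k v_j(t) v_j(t)ᵀ) F(x(t)) for all t ∈ [0,T]. Then for every t ∈ [0,T], ‖x(t)‖² ≤ (‖x(0)‖² + (1+2k) β L T) · exp(3(1+2k) β L T). -/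
/-!
The velocity `β (I - 2 ∑ vⱼ vⱼᵀ) F(x)` is at most `(1 + 2k) β L (1 + ‖x‖)` in norm, since each
projection `vⱼ vⱼᵀ` onto a unit vector is a contraction. Hence `g = ‖x‖²` satisfies
`|g'| = 2 |⟪x, x'⟫| ≤ 3A g + A` with `A = (1 + 2k) β L`, and Grönwall's inequality gives
`g(t) ≤ g(0) e^{3At} + (e^{3At} - 1)/3`; the last term is at most `A t e^{3At}`.
-/

open scoped InnerProductSpace
open Set

theorem gronwallBound_le_add_mul_mul_exp {δ K ε : ℝ} (hK : 0 ≤ K) (hε : 0 ≤ ε) (x : ℝ) :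
    gronwallBound δ K ε x ≤ (δ + ε * x) * Real.exp (K * x) := by
  rcases hK.eq_or_lt with rfl | hK
  · simp [gronwallBound_K0]
  rw [gronwallBound_of_K_ne_0 hK.ne']
  have hexp : Real.exp (K * x) - 1 ≤ K * x * Real.exp (K * x) := by
    have h := Real.add_one_le_exp (-(K * x))
    rw [Real.exp_neg] at h
    have h' := mul_le_mul_of_nonneg_right h (Real.exp_pos (K * x)).le
    rw [inv_mul_cancel₀ (Real.exp_pos _).ne'] at h'
    linarith
  have hdiv : ε / K * (Real.exp (K * x) - 1) ≤ ε * x * Real.exp (K * x) := by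
    rw [div_mul_eq_mul_div, div_le_iff₀ hK]
    nlinarith
  nlinarith

section InnerProductSpace

variable {E : Type*} [NormedAddCommGroup E] [InnerProductSpace ℝ E]

theorem norm_inner_smul_le_of_norm_le_one {v : E} (hv : ‖v‖ ≤ 1) (y : E) :
    ‖⟪v, y⟫_ℝ • v‖ ≤ ‖y‖ := by
  have hinner : |⟪v, y⟫_ℝ| ≤ ‖y‖ :=
    (abs_real_inner_le_norm v y).trans (mul_le_of_le_one_left (norm_nonneg y) hv)
  calc ‖⟪v, y⟫_ℝ • v‖ = |⟪v, y⟫_ℝ| * ‖v‖ := by rw [norm_smul, Real.norm_eq_abs]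
    _ ≤ ‖y‖ * 1 := mul_le_mul hinner hv (norm_nonneg v) (norm_nonneg y)
    _ = ‖y‖ := mul_one _

theorem norm_sub_two_smul_sum_inner_smul_le {ι : Type*} [Fintype ι] {v : ι → E}
    (hv : ∀ j, ‖v j‖ ≤ 1) (y : E) :
    ‖y - (2:ℝ) • ∑ j, ⟪v j, y⟫_ℝ • v j‖ ≤ (1 + 2 * Fintype.card ι) * ‖y‖ := by
  have hsum : ‖∑ j, ⟪v j, y⟫_ℝ • v j‖ ≤ Fintype.card ι * ‖y‖ :=
    calc ‖∑ j, ⟪v j, y⟫_ℝ • v j‖ ≤ ∑ j, ‖⟪v j, y⟫_ℝ • v j‖ := norm_sum_le _ _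
      _ ≤ ∑ _j : ι, ‖y‖ := Finset.sum_le_sum fun j _ => norm_inner_smul_le_of_norm_le_one (hv j) y
      _ = Fintype.card ι * ‖y‖ := by rw [Finset.sum_const, Finset.card_univ, nsmul_eq_mul]
  calc ‖y - (2:ℝ) • ∑ j, ⟪v j, y⟫_ℝ • v j‖ ≤ ‖y‖ + 2 * ‖∑ j, ⟪v j, y⟫_ℝ • v j‖ := by
        simpa [norm_smul] using norm_sub_le y ((2:ℝ) • ∑ j, ⟪v j, y⟫_ℝ • v j)
    _ ≤ ‖y‖ + 2 * (Fintype.card ι * ‖y‖) := by gcongr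
    _ = (1 + 2 * Fintype.card ι) * ‖y‖ := by ring

theorem abs_two_mul_inner_le_of_norm_le_mul_one_add_norm {y d : E} {A : ℝ} (hA : 0 ≤ A)
    (hd : ‖d‖ ≤ A * (1 + ‖y‖)) :
    |2 * ⟪y, d⟫_ℝ| ≤ 3 * A * ‖y‖ ^ 2 + A := by
  have hinner : |⟪y, d⟫_ℝ| ≤ ‖y‖ * (A * (1 + ‖y‖)) :=
    (abs_real_inner_le_norm y d).trans (by gcongr)
  -- `2 ‖y‖ ≤ 1 + ‖y‖²`
  rw [abs_mul, abs_two]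
  nlinarith [sq_nonneg (1 - ‖y‖)]

theorem norm_sq_le_of_norm_deriv_right_le_mul_one_add_norm {x x' : ℝ → E} {a b A : ℝ}
    (hA : 0 ≤ A) (hx : ContinuousOn x (Icc a b))
    (hx' : ∀ t ∈ Ico a b, HasDerivWithinAt x (x' t) (Ici t) t)
    (bound : ∀ t ∈ Ico a b, ‖x' t‖ ≤ A * (1 + ‖x t‖)) :
    ∀ t ∈ Icc a b, ‖x t‖ ^ 2 ≤ (‖x a‖ ^ 2 + A * (b - a)) * Real.exp (3 * A * (b - a)) := by
  have hgronwall := norm_le_gronwallBound_of_norm_deriv_right_le (f := fun t => ‖x t‖ ^ 2)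
    (δ := ‖x a‖ ^ 2) (K := 3 * A) (ε := A) (hx.norm.pow 2) (fun t ht => (hx' t ht).norm_sq)
    (by rw [Real.norm_of_nonneg (by positivity)])
    (fun t ht => by
      rw [Real.norm_eq_abs, Real.norm_of_nonneg (by positivity)]
      exact abs_two_mul_inner_le_of_norm_le_mul_one_add_norm hA (bound t ht))
  intro t ht
  calc ‖x t‖ ^ 2 = ‖‖x t‖ ^ 2‖ := by rw [Real.norm_of_nonneg (by positivity)]
    _ ≤ gronwallBound (‖x a‖ ^ 2) (3 * A) A (t - a) := hgronwall t ht
    _ ≤ gronwallBound (‖x a‖ ^ 2) (3 * A) A (b - a) :=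
        gronwallBound_mono (by positivity) hA (by positivity) (by linarith [ht.2])
    _ ≤ (‖x a‖ ^ 2 + A * (b - a)) * Real.exp (3 * A * (b - a)) :=
        gronwallBound_le_add_mul_mul_exp (by positivity) hA _

end InnerProductSpace

theorem boundedness_of_position_kSD_general (N k : ℕ)
    (T β L : ℝ) (hβ : 0 < β) (hL : 0 < L)
    (F : EuclideanSpace ℝ (Fin N) → EuclideanSpace ℝ (Fin N))
    (hF : ∀ y, ‖F y‖ ≤ L * (1 + ‖y‖))
    (x : ℝ → EuclideanSpace ℝ (Fin N))
    (v : Fin k → ℝ → EuclideanSpace ℝ (Fin N))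
    (hv : ∀ t ∈ Set.Icc (0:ℝ) T, ∀ j, ‖v j t‖ = 1)
    (hx : ∀ t ∈ Set.Icc (0:ℝ) T,
      HasDerivWithinAt x
        (β • (F (x t) - (2:ℝ) • ∑ j, ⟪v j t, F (x t)⟫_ℝ • v j t))
        (Set.Icc (0:ℝ) T) t) :
    ∀ t ∈ Set.Icc (0:ℝ) T,
      ‖x t‖ ^ 2 ≤ (‖x 0‖ ^ 2 + (1 + 2 * (k:ℝ)) * β * L * T) *
        Real.exp (3 * (1 + 2 * (k:ℝ)) * β * L * T) := by
  have hvelocity : ∀ t ∈ Icc (0:ℝ) T,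
      ‖β • (F (x t) - (2:ℝ) • ∑ j, ⟪v j t, F (x t)⟫_ℝ • v j t)‖ ≤
        (1 + 2 * (k:ℝ)) * β * L * (1 + ‖x t‖) := by
    intro t ht
    have hreflect := norm_sub_two_smul_sum_inner_smul_le (fun j => (hv t ht j).le) (F (x t))
    rw [Fintype.card_fin] at hreflect
    calc ‖β • (F (x t) - (2:ℝ) • ∑ j, ⟪v j t, F (x t)⟫_ℝ • v j t)‖
        ≤ β * ((1 + 2 * (k:ℝ)) * ‖F (x t)‖) := by
          rw [norm_smul, Real.norm_of_nonneg hβ.le]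
          gcongr
      _ ≤ β * ((1 + 2 * (k:ℝ)) * (L * (1 + ‖x t‖))) := by gcongr; exact hF _
      _ = (1 + 2 * (k:ℝ)) * β * L * (1 + ‖x t‖) := by ring
  intro t ht
  have h := norm_sq_le_of_norm_deriv_right_le_mul_one_add_norm (by positivity)
    (fun t ht => (hx t ht).continuousWithinAt)
    (fun t ht => (hx t (Ico_subset_Icc_self ht)).mono_of_mem_nhdsWithin (Icc_mem_nhdsGE_of_mem ht))
    (fun t ht => hvelocity t (Ico_subset_Icc_self ht)) t ht
  simpa only [sub_zero, mul_assoc] using h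

/-- Boundedness of the position variable of the continuous index-k saddle dynamics
(estimate (2.8) in the paper). -/
theorem boundedness_of_position_kSD (N k : ℕ) (hN : 1 ≤ N) (hk : 1 ≤ k)
    (T β L : ℝ) (hT : 0 < T) (hβ : 0 < β) (hL : 0 < L)
    (F : EuclideanSpace ℝ (Fin N) → EuclideanSpace ℝ (Fin N))
    (hF : ∀ y, ‖F y‖ ≤ L * (1 + ‖y‖))
    (x : ℝ → EuclideanSpace ℝ (Fin N))
    (v : Fin k → ℝ → EuclideanSpace ℝ (Fin N))
    (hv : ∀ t ∈ Set.Icc (0:ℝ) T, ∀ j, ‖v j t‖ = 1)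
    (hx : ∀ t ∈ Set.Icc (0:ℝ) T,
      HasDerivWithinAt x
        (β • (F (x t) - (2:ℝ) • ∑ j, ⟪v j t, F (x t)⟫_ℝ • v j t))
        (Set.Icc (0:ℝ) T) t) :
    ∀ t ∈ Set.Icc (0:ℝ) T,
      ‖x t‖ ^ 2 ≤ (‖x 0‖ ^ 2 + (1 + 2 * (k:ℝ)) * β * L * T) *
        Real.exp (3 * (1 + 2 * (k:ℝ)) * β * L * T) :=
  boundedness_of_position_kSD_general N k T β L hβ hL F hF x v hv hx
end

section
/- Let N ≥ 1, let v ∈ ℝ^N with ‖v‖ = 1, let J be a linear map from ℝ^N to ℝ^N with operator norm ‖J‖ ≤ J̄, let τ, γ ≥ 0, and set ṽ = v + τ γ (I - v vᵀ) J v. Then |‖ṽ‖ - 1| ≤ |‖ṽ‖² - 1| ≤ τ² γ² J̄². -/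
/-!
Since `‖v‖ = 1`, the increment `w = Jv - ⟪v, Jv⟫ v` is orthogonal to `v`, so by Pythagoras
`‖ṽ‖² = 1 + (τγ)² ‖w‖²`. As `w` is the component of `Jv` orthogonal to `v`,
`‖w‖ ≤ ‖Jv‖ ≤ J̄`, which gives the second inequality. The first one is
`|a - 1| ≤ |a - 1| (a + 1) = |a² - 1|` for `a = ‖ṽ‖ ≥ 0`.
-/

open scoped InnerProductSpace

theorem abs_sub_one_le_abs_sq_sub_one {a : ℝ} (ha : 0 ≤ a) : |a - 1| ≤ |a ^ 2 - 1| := by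
  calc |a - 1| ≤ |a - 1| * (a + 1) := le_mul_of_one_le_right (abs_nonneg _) (by linarith)
    _ = |a ^ 2 - 1| := by
      rw [show a ^ 2 - 1 = (a - 1) * (a + 1) by ring, abs_mul,
        abs_of_nonneg (by linarith : 0 ≤ a + 1)]

section InnerProductSpace

variable {E : Type*} [NormedAddCommGroup E] [InnerProductSpace ℝ E]

theorem norm_add_smul_sq_of_inner_eq_zero {v w : E} (h : ⟪v, w⟫_ℝ = 0) (c : ℝ) :
    ‖v + c • w‖ ^ 2 = ‖v‖ ^ 2 + c ^ 2 * ‖w‖ ^ 2 := by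
  have horth : ⟪v, c • w⟫_ℝ = 0 := by rw [real_inner_smul_right, h, mul_zero]
  simp only [sq]
  rw [norm_add_sq_eq_norm_sq_add_norm_sq_real horth, norm_smul, Real.norm_eq_abs,
    ← abs_mul_abs_self c]
  ring

theorem inner_sub_inner_smul_self_eq_zero {v : E} (hv : ‖v‖ = 1) (x : E) :
    ⟪v, x - ⟪v, x⟫_ℝ • v⟫_ℝ = 0 := by
  rw [inner_sub_right, real_inner_smul_right, real_inner_self_eq_norm_sq, hv]
  ring

theorem norm_sub_inner_smul_self_le {v : E} (hv : ‖v‖ = 1) (x : E) :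
    ‖x - ⟪v, x⟫_ℝ • v‖ ≤ ‖x‖ := by
  have hpyth := norm_add_smul_sq_of_inner_eq_zero
    (real_inner_comm v _ ▸ inner_sub_inner_smul_self_eq_zero hv x) ⟪v, x⟫_ℝ
  rw [sub_add_cancel, hv] at hpyth
  exact le_of_pow_le_pow_left₀ two_ne_zero (norm_nonneg x)
    (by nlinarith [sq_nonneg ⟪v, x⟫_ℝ])

end InnerProductSpace

theorem norm_near_one_euler_direction_update_general (N : ℕ)
    (v : EuclideanSpace ℝ (Fin N)) (hv : ‖v‖ = 1)
    (J : EuclideanSpace ℝ (Fin N) →L[ℝ] EuclideanSpace ℝ (Fin N))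
    (Jbar : ℝ) (hJ : ‖J‖ ≤ Jbar) (τ γ : ℝ)
    (vt : EuclideanSpace ℝ (Fin N))
    (hvt : vt = v + (τ * γ) • (J v - ⟪v, J v⟫_ℝ • v)) :
    |‖vt‖ - 1| ≤ |‖vt‖ ^ 2 - 1| ∧ |‖vt‖ ^ 2 - 1| ≤ τ ^ 2 * γ ^ 2 * Jbar ^ 2 := by
  set w := J v - ⟪v, J v⟫_ℝ • v
  have hnorm_sq : ‖vt‖ ^ 2 - 1 = (τ * γ) ^ 2 * ‖w‖ ^ 2 := by
    rw [hvt, norm_add_smul_sq_of_inner_eq_zero (inner_sub_inner_smul_self_eq_zero hv (J v)), hv]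
    ring
  have hw : ‖w‖ ≤ Jbar :=
    calc ‖w‖ ≤ ‖J v‖ := norm_sub_inner_smul_self_le hv (J v)
      _ ≤ ‖J‖ * ‖v‖ := J.le_opNorm v
      _ ≤ Jbar := by rwa [hv, mul_one]
  refine ⟨abs_sub_one_le_abs_sq_sub_one (norm_nonneg vt), ?_⟩
  rw [hnorm_sq, abs_of_nonneg (by positivity), mul_pow]
  gcongr

/-- Lemma 3.1 of the paper: |‖ṽ‖ - 1| ≤ |‖ṽ‖² - 1| ≤ τ² γ² J̄² for the
un-normalized Euler direction update. -/
theorem norm_near_one_euler_direction_update (N : ℕ) (hN : 1 ≤ N)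
    (v : EuclideanSpace ℝ (Fin N)) (hv : ‖v‖ = 1)
    (J : EuclideanSpace ℝ (Fin N) →L[ℝ] EuclideanSpace ℝ (Fin N))
    (Jbar : ℝ) (hJ : ‖J‖ ≤ Jbar) (τ γ : ℝ) (hτ : 0 ≤ τ) (hγ : 0 ≤ γ)
    (vt : EuclideanSpace ℝ (Fin N))
    (hvt : vt = v + (τ * γ) • (J v - ⟪v, J v⟫_ℝ • v)) :
    |‖vt‖ - 1| ≤ |‖vt‖ ^ 2 - 1| ∧ |‖vt‖ ^ 2 - 1| ≤ τ ^ 2 * γ ^ 2 * Jbar ^ 2 :=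
  norm_near_one_euler_direction_update_general N v hv J Jbar hJ τ γ vt hvt
end

section
/- Let N ≥ 1, let v ∈ ℝ^N with ‖v‖ = 1, let J be a linear map from ℝ^N to ℝ^N with operator norm ‖J‖ ≤ J̄, let τ, γ ≥ 0, and set ṽ = v + τ γ (I - v vᵀ) J v. Then ṽ ≠ 0 and ‖ṽ - ṽ/‖ṽ‖‖ ≤ τ² γ² J̄². -/
/-!
Write `ṽ = v + w` with `w = τγ (Jv - ⟪v, Jv⟫ v)`. The correction `w` is orthogonal to the unit
vector `v`, so `‖ṽ‖² = 1 + ‖w‖² ≥ 1`, and normalizing moves `ṽ` by exactly `‖ṽ‖ - 1 ≤ ‖ṽ‖² - 1 = ‖w‖²`.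
Finally `‖w‖ ≤ |τγ| ‖Jv‖ ≤ |τγ| J̄`, since removing the `v`-component does not increase the norm.
-/

open scoped InnerProductSpace

theorem norm_sub_inv_norm_smul_self {E : Type*} [NormedAddCommGroup E] [NormedSpace ℝ E]
    {x : E} (hx : x ≠ 0) : ‖x - ‖x‖⁻¹ • x‖ = |‖x‖ - 1| := by
  have hx' : ‖x‖ ≠ 0 := norm_ne_zero_iff.mpr hx
  calc ‖x - ‖x‖⁻¹ • x‖ = ‖(1 - ‖x‖⁻¹) • x‖ := by rw [sub_smul, one_smul]
    _ = |‖x‖ - 1| := by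
        rw [norm_smul, Real.norm_eq_abs, ← abs_norm x, ← abs_mul, abs_norm, sub_mul,
          inv_mul_cancel₀ hx', one_mul]

section UnitVector

variable {E : Type*} [NormedAddCommGroup E] [InnerProductSpace ℝ E] {v : E}

theorem inner_sub_inner_smul_self (hv : ‖v‖ = 1) (x : E) : ⟪v, x - ⟪v, x⟫_ℝ • v⟫_ℝ = 0 := by
  rw [inner_sub_right, real_inner_smul_right, real_inner_self_eq_norm_sq, hv, one_pow, mul_one,
    sub_self]

theorem norm_sub_inner_smul_le (hv : ‖v‖ = 1) (x : E) : ‖x - ⟪v, x⟫_ℝ • v‖ ≤ ‖x‖ := by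
  set y := x - ⟪v, x⟫_ℝ • v
  set p := ⟪v, x⟫_ℝ • v
  have hpyth : ‖x‖ * ‖x‖ = ‖p‖ * ‖p‖ + ‖y‖ * ‖y‖ := by
    rw [← norm_add_sq_eq_norm_sq_add_norm_sq_real, add_sub_cancel]
    rw [real_inner_smul_left, inner_sub_inner_smul_self hv, mul_zero]
  exact (mul_self_le_mul_self_iff (norm_nonneg y) (norm_nonneg x)).mpr
    (by nlinarith [mul_self_nonneg ‖p‖])

variable {w : E}

theorem norm_add_sq_of_inner_eq_zero (hv : ‖v‖ = 1) (hw : ⟪v, w⟫_ℝ = 0) :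
    ‖v + w‖ ^ 2 = 1 + ‖w‖ ^ 2 := by
  rw [sq, sq, norm_add_sq_eq_norm_sq_add_norm_sq_real hw, hv, one_mul]

theorem one_le_norm_add_of_inner_eq_zero (hv : ‖v‖ = 1) (hw : ⟪v, w⟫_ℝ = 0) : 1 ≤ ‖v + w‖ := by
  rw [← one_le_sq_iff₀ (norm_nonneg _), norm_add_sq_of_inner_eq_zero hv hw]
  exact le_add_of_nonneg_right (sq_nonneg ‖w‖)

theorem norm_sub_inv_norm_smul_add_le (hv : ‖v‖ = 1) (hw : ⟪v, w⟫_ℝ = 0) :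
    ‖(v + w) - ‖v + w‖⁻¹ • (v + w)‖ ≤ ‖w‖ ^ 2 := by
  have hone := one_le_norm_add_of_inner_eq_zero hv hw
  have hsq := norm_add_sq_of_inner_eq_zero hv hw
  rw [norm_sub_inv_norm_smul_self (norm_pos_iff.mp (zero_lt_one.trans_le hone)),
    abs_of_nonneg (sub_nonneg.mpr hone)]
  nlinarith

end UnitVector

theorem normalization_error_euler_direction_update_general (N : ℕ)
    (v : EuclideanSpace ℝ (Fin N)) (hv : ‖v‖ = 1)
    (J : EuclideanSpace ℝ (Fin N) →L[ℝ] EuclideanSpace ℝ (Fin N))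
    (Jbar : ℝ) (hJ : ‖J‖ ≤ Jbar) (τ γ : ℝ)
    (vt : EuclideanSpace ℝ (Fin N))
    (hvt : vt = v + (τ * γ) • (J v - ⟪v, J v⟫_ℝ • v)) :
    vt ≠ 0 ∧ ‖vt - ‖vt‖⁻¹ • vt‖ ≤ τ ^ 2 * γ ^ 2 * Jbar ^ 2 := by
  set w := (τ * γ) • (J v - ⟪v, J v⟫_ℝ • v)
  have hw_orth : ⟪v, w⟫_ℝ = 0 := by
    rw [real_inner_smul_right, inner_sub_inner_smul_self hv, mul_zero]
  have hw_le : ‖w‖ ≤ |τ * γ| * Jbar := by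
    rw [norm_smul, Real.norm_eq_abs]
    gcongr
    calc ‖J v - ⟪v, J v⟫_ℝ • v‖ ≤ ‖J v‖ := norm_sub_inner_smul_le hv (J v)
      _ ≤ Jbar * ‖v‖ := J.le_of_opNorm_le hJ v
      _ = Jbar := by rw [hv, mul_one]
  subst hvt
  have hone := one_le_norm_add_of_inner_eq_zero hv hw_orth
  refine ⟨norm_pos_iff.mp (zero_lt_one.trans_le hone), ?_⟩
  calc _ ≤ ‖w‖ ^ 2 := norm_sub_inv_norm_smul_add_le hv hw_orth
    _ ≤ (|τ * γ| * Jbar) ^ 2 := pow_le_pow_left₀ (norm_nonneg w) hw_le 2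
    _ = τ ^ 2 * γ ^ 2 * Jbar ^ 2 := by rw [mul_pow, sq_abs, mul_pow]

/-- Corollary 3.1 of the paper: the normalization step of the explicit Euler scheme
for index-1 saddle dynamics changes ṽ by at most τ² γ² J̄². -/
theorem normalization_error_euler_direction_update (N : ℕ) (hN : 1 ≤ N)
    (v : EuclideanSpace ℝ (Fin N)) (hv : ‖v‖ = 1)
    (J : EuclideanSpace ℝ (Fin N) →L[ℝ] EuclideanSpace ℝ (Fin N))
    (Jbar : ℝ) (hJ : ‖J‖ ≤ Jbar) (τ γ : ℝ) (hτ : 0 ≤ τ) (hγ : 0 ≤ γ)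
    (vt : EuclideanSpace ℝ (Fin N))
    (hvt : vt = v + (τ * γ) • (J v - ⟪v, J v⟫_ℝ • v)) :
    vt ≠ 0 ∧ ‖vt - ‖vt‖⁻¹ • vt‖ ≤ τ ^ 2 * γ ^ 2 * Jbar ^ 2 :=
  normalization_error_euler_direction_update_general N v hv J Jbar hJ τ γ vt hvt
end

section
/- Let N ≥ 1, τ, β ≥ 0, L > 0, and let F : ℝ^N → ℝ^N satisfy ‖F(a) - F(b)‖ ≤ L‖a - b‖ and ‖F(y)‖ ≤ L(1 + ‖y‖) for all a, b, y. Let x̄, x ∈ ℝ^N and let v̄, v ∈ ℝ^N with ‖v̄‖ = ‖v‖ = 1. Set x̄⁺ = x̄ + τ β (I - 2 v̄ v̄ᵀ) F(x̄) and x⁺ = x + τ β (I - 2 v vᵀ) F(x). Then ‖x̄⁺ - x⁺‖ ≤ (1 + 3 τ β L) ‖x̄ - x‖ + 4 τ β L (1 + ‖x̄‖) ‖v̄ - v‖. -/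
/-!
For a unit vector `v`, the map `H_v u = u - 2⟪v, u⟫ v` is minus the reflection in the line `ℝ ∙ v`,
hence an isometry, and it depends Lipschitz-continuously on `v`:
`‖⟪v, u⟫ v - ⟪w, u⟫ w‖ ≤ 2 ‖v - w‖ ‖u‖`. Writing `H_v̄ F(x̄) - H_v F(x) = H_v (F x̄ - F x) + (H_v̄ - H_v) F x̄`,
the first term is controlled by the Lipschitz bound on `F` and the second by the growth bound on
`F x̄`.
-/

open scoped InnerProductSpace

section Householder

variable {E : Type*} [NormedAddCommGroup E] [InnerProductSpace ℝ E]

theorem norm_sub_two_inner_smul_of_norm_eq_one {v : E} (hv : ‖v‖ = 1) (u : E) :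
    ‖u - (2 * ⟪v, u⟫_ℝ) • v‖ = ‖u‖ := by
  have hreflect : u - (2 * ⟪v, u⟫_ℝ) • v = -(ℝ ∙ v).reflection u := by
    rw [Submodule.reflection_apply, Submodule.starProjection_unit_singleton ℝ hv]
    module
  rw [hreflect, norm_neg, LinearIsometryEquiv.norm_map]

theorem norm_inner_smul_sub_inner_smul_le {v w : E} (hv : ‖v‖ = 1) (hw : ‖w‖ = 1) (u : E) :
    ‖⟪v, u⟫_ℝ • v - ⟪w, u⟫_ℝ • w‖ ≤ 2 * ‖v - w‖ * ‖u‖ := by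
  have hsplit : ⟪v, u⟫_ℝ • v - ⟪w, u⟫_ℝ • w = ⟪v - w, u⟫_ℝ • v + ⟪w, u⟫_ℝ • (v - w) := by
    rw [inner_sub_left]; module
  calc ‖⟪v, u⟫_ℝ • v - ⟪w, u⟫_ℝ • w‖
      ≤ ‖⟪v - w, u⟫_ℝ‖ * ‖v‖ + ‖⟪w, u⟫_ℝ‖ * ‖v - w‖ := by
        rw [hsplit, ← norm_smul, ← norm_smul]; exact norm_add_le _ _
    _ ≤ ‖v - w‖ * ‖u‖ * 1 + ‖w‖ * ‖u‖ * ‖v - w‖ := by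
        rw [hv]; gcongr <;> exact norm_inner_le_norm _ _
    _ = 2 * ‖v - w‖ * ‖u‖ := by rw [hw]; ring

theorem norm_sub_two_inner_smul_sub_le {v w : E} (hv : ‖v‖ = 1) (hw : ‖w‖ = 1) (a b : E) :
    ‖(a - (2 * ⟪v, a⟫_ℝ) • v) - (b - (2 * ⟪w, b⟫_ℝ) • w)‖ ≤ ‖a - b‖ + 4 * ‖v - w‖ * ‖a‖ := by
  have hsplit : (a - (2 * ⟪v, a⟫_ℝ) • v) - (b - (2 * ⟪w, b⟫_ℝ) • w)
      = ((a - b) - (2 * ⟪w, a - b⟫_ℝ) • w) - (2 : ℝ) • (⟪v, a⟫_ℝ • v - ⟪w, a⟫_ℝ • w) := by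
    rw [inner_sub_right]; module
  calc _ ≤ ‖(a - b) - (2 * ⟪w, a - b⟫_ℝ) • w‖ + 2 * ‖⟪v, a⟫_ℝ • v - ⟪w, a⟫_ℝ • w‖ := by
        rw [hsplit]
        exact (norm_sub_le _ _).trans_eq (by rw [norm_smul, Real.norm_two])
    _ ≤ ‖a - b‖ + 2 * (2 * ‖v - w‖ * ‖a‖) := by
        rw [norm_sub_two_inner_smul_of_norm_eq_one hw]
        gcongr
        exact norm_inner_smul_sub_inner_smul_le hv hw a
    _ = ‖a - b‖ + 4 * ‖v - w‖ * ‖a‖ := by ring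

end Householder

theorem one_step_position_stability_euler_1SD_general (N : ℕ)
    (τ β L : ℝ) (hτ : 0 ≤ τ) (hβ : 0 ≤ β) (hL : 0 < L)
    (F : EuclideanSpace ℝ (Fin N) → EuclideanSpace ℝ (Fin N))
    (hFlip : ∀ a b, ‖F a - F b‖ ≤ L * ‖a - b‖)
    (hFg : ∀ y, ‖F y‖ ≤ L * (1 + ‖y‖))
    (x1 x2 v1 v2 : EuclideanSpace ℝ (Fin N)) (hv1 : ‖v1‖ = 1) (hv2 : ‖v2‖ = 1) :
    ‖(x1 + (τ * β) • (F x1 - (2 * ⟪v1, F x1⟫_ℝ) • v1)) -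
      (x2 + (τ * β) • (F x2 - (2 * ⟪v2, F x2⟫_ℝ) • v2))‖
      ≤ (1 + 3 * τ * β * L) * ‖x1 - x2‖ + 4 * τ * β * L * (1 + ‖x1‖) * ‖v1 - v2‖ := by
  have hτβ : 0 ≤ τ * β := mul_nonneg hτ hβ
  calc _ = ‖(x1 - x2) + (τ * β) •
        ((F x1 - (2 * ⟪v1, F x1⟫_ℝ) • v1) - (F x2 - (2 * ⟪v2, F x2⟫_ℝ) • v2))‖ := by
        congr 1; module
    _ ≤ ‖x1 - x2‖ + τ * β * (‖F x1 - F x2‖ + 4 * ‖v1 - v2‖ * ‖F x1‖) := by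
        refine (norm_add_le _ _).trans ?_
        rw [norm_smul, Real.norm_of_nonneg hτβ]
        gcongr
        exact norm_sub_two_inner_smul_sub_le hv1 hv2 (F x1) (F x2)
    _ ≤ ‖x1 - x2‖ + τ * β * (L * ‖x1 - x2‖ + 4 * ‖v1 - v2‖ * (L * (1 + ‖x1‖))) := by
        gcongr
        exacts [hFlip x1 x2, hFg x1]
    _ ≤ _ := by
        have : 0 ≤ τ * β * L * ‖x1 - x2‖ := by positivity
        nlinarith

/-- One-step stability estimate for the position update of the explicit Euler
scheme for index-1 saddle dynamics (part of the proof of Theorem 3.1). -/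
theorem one_step_position_stability_euler_1SD (N : ℕ) (hN : 1 ≤ N)
    (τ β L : ℝ) (hτ : 0 ≤ τ) (hβ : 0 ≤ β) (hL : 0 < L)
    (F : EuclideanSpace ℝ (Fin N) → EuclideanSpace ℝ (Fin N))
    (hFlip : ∀ a b, ‖F a - F b‖ ≤ L * ‖a - b‖)
    (hFg : ∀ y, ‖F y‖ ≤ L * (1 + ‖y‖))
    (x1 x2 v1 v2 : EuclideanSpace ℝ (Fin N)) (hv1 : ‖v1‖ = 1) (hv2 : ‖v2‖ = 1) :
    ‖(x1 + (τ * β) • (F x1 - (2 * ⟪v1, F x1⟫_ℝ) • v1)) -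
      (x2 + (τ * β) • (F x2 - (2 * ⟪v2, F x2⟫_ℝ) • v2))‖
      ≤ (1 + 3 * τ * β * L) * ‖x1 - x2‖ + 4 * τ * β * L * (1 + ‖x1‖) * ‖v1 - v2‖ :=
  one_step_position_stability_euler_1SD_general N τ β L hτ hβ hL F hFlip hFg x1 x2 v1 v2 hv1 hv2
end

section
/- Let N ≥ 1, τ, γ ≥ 0, L > 0, and let J map ℝ^N to linear maps from ℝ^N to ℝ^N with ‖J(a) - J(b)‖ ≤ L‖a - b‖ for all a, b (operator norm). Let x̄, x ∈ ℝ^N and let v̄, v ∈ ℝ^N with ‖v̄‖ = ‖v‖ = 1. Set v̄⁺ = v̄ + τ γ (I - v̄ v̄ᵀ) J(x̄) v̄ and v⁺ = v + τ γ (I - v vᵀ) J(x) v. Then ‖v̄⁺ - v⁺‖ ≤ (1 + 2 τ γ (‖J(x̄)‖ + ‖J(x)‖)) ‖v̄ - v‖ + 2 τ γ L ‖x̄ - x‖. -/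
open scoped InnerProductSpace

/-!
Write the step as `w + τγ r(A, w)` with the eigen-residual `r(A, w) = A w - ⟪w, A w⟫ w`.
Splitting `A u - B v = A (u - v) + (A - B) v`, and likewise the Rayleigh quotients and the
projections `⟪w, A w⟫ w`, shows that for unit vectors `r` is Lipschitz in `w` with constant
`2 (‖A‖ + ‖B‖)` and in the operator with constant `2`; the Lipschitz bound on `J` converts
`‖J x̄ - J x‖` into `L ‖x̄ - x‖`.
-/

theorem ContinuousLinearMap.norm_apply_sub_apply_le {𝕜 E F : Type*} [NontriviallyNormedField 𝕜]
    [SeminormedAddCommGroup E] [SeminormedAddCommGroup F] [NormedSpace 𝕜 E] [NormedSpace 𝕜 F]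
    (A B : E →L[𝕜] F) (u v : E) : ‖A u - B v‖ ≤ ‖A‖ * ‖u - v‖ + ‖A - B‖ * ‖v‖ := by
  have hsplit : A u - B v = A (u - v) + (A - B) v := by
    rw [map_sub, sub_apply]; abel
  rw [hsplit]
  exact (norm_add_le _ _).trans (add_le_add (A.le_opNorm _) ((A - B).le_opNorm _))

section

variable {E : Type*} [NormedAddCommGroup E] [InnerProductSpace ℝ E]

/-- The vector `(I - w wᵀ) A w`. -/
def eigenResidual (A : E →L[ℝ] E) (w : E) : E := A w - ⟪w, A w⟫_ℝ • w

variable {A B : E →L[ℝ] E} {u v : E}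

theorem abs_inner_apply_self_le_opNorm (hv : ‖v‖ = 1) : |⟪v, B v⟫_ℝ| ≤ ‖B‖ :=
  calc |⟪v, B v⟫_ℝ| ≤ ‖v‖ * ‖B v‖ := abs_real_inner_le_norm _ _
    _ ≤ ‖v‖ * (‖B‖ * ‖v‖) := by gcongr; exact B.le_opNorm v
    _ = ‖B‖ := by rw [hv]; ring

theorem abs_inner_apply_self_sub_inner_apply_self_le (hu : ‖u‖ = 1) (hv : ‖v‖ = 1) :
    |⟪u, A u⟫_ℝ - ⟪v, B v⟫_ℝ| ≤ (‖A‖ + ‖B‖) * ‖u - v‖ + ‖A - B‖ := by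
  have hsplit : ⟪u, A u⟫_ℝ - ⟪v, B v⟫_ℝ = ⟪u, A u - B v⟫_ℝ + ⟪u - v, B v⟫_ℝ := by
    rw [inner_sub_right, inner_sub_left]; ring
  have hfirst : |⟪u, A u - B v⟫_ℝ| ≤ ‖A‖ * ‖u - v‖ + ‖A - B‖ :=
    calc |⟪u, A u - B v⟫_ℝ| ≤ ‖u‖ * ‖A u - B v‖ := abs_real_inner_le_norm _ _
      _ ≤ ‖A‖ * ‖u - v‖ + ‖A - B‖ * ‖v‖ := by
        rw [hu, one_mul]; exact A.norm_apply_sub_apply_le B u v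
      _ = ‖A‖ * ‖u - v‖ + ‖A - B‖ := by rw [hv, mul_one]
  have hsecond : |⟪u - v, B v⟫_ℝ| ≤ ‖B‖ * ‖u - v‖ :=
    calc |⟪u - v, B v⟫_ℝ| ≤ ‖u - v‖ * ‖B v‖ := abs_real_inner_le_norm _ _
      _ ≤ ‖u - v‖ * (‖B‖ * ‖v‖) := by gcongr; exact B.le_opNorm v
      _ = ‖B‖ * ‖u - v‖ := by rw [hv]; ring
  rw [hsplit]
  linarith [abs_add_le ⟪u, A u - B v⟫_ℝ ⟪u - v, B v⟫_ℝ]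

theorem norm_eigenResidual_sub_eigenResidual_le (hu : ‖u‖ = 1) (hv : ‖v‖ = 1) :
    ‖eigenResidual A u - eigenResidual B v‖ ≤ 2 * (‖A‖ + ‖B‖) * ‖u - v‖ + 2 * ‖A - B‖ := by
  set a := ⟪u, A u⟫_ℝ
  set b := ⟪v, B v⟫_ℝ
  have hsplit : eigenResidual A u - eigenResidual B v
      = (A u - B v) - ((a - b) • u + b • (u - v)) := by
    unfold eigenResidual; module
  have hproj : ‖(a - b) • u + b • (u - v)‖ ≤ (‖A‖ + ‖B‖) * ‖u - v‖ + ‖A - B‖ + ‖B‖ * ‖u - v‖ :=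
    calc ‖(a - b) • u + b • (u - v)‖ ≤ |a - b| * ‖u‖ + |b| * ‖u - v‖ := by
          simpa only [norm_smul, Real.norm_eq_abs] using norm_add_le ((a - b) • u) (b • (u - v))
      _ ≤ ((‖A‖ + ‖B‖) * ‖u - v‖ + ‖A - B‖) * 1 + ‖B‖ * ‖u - v‖ := by
          rw [hu]
          gcongr
          · exact abs_inner_apply_self_sub_inner_apply_self_le hu hv
          · exact abs_inner_apply_self_le_opNorm hv
      _ = _ := by ring
  have happly : ‖A u - B v‖ ≤ ‖A‖ * ‖u - v‖ + ‖A - B‖ := by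
    simpa only [hv, mul_one] using A.norm_apply_sub_apply_le B u v
  rw [hsplit]
  linarith [norm_sub_le (A u - B v) ((a - b) • u + b • (u - v))]

end

theorem one_step_direction_stability_euler_1SD_general (N : ℕ)
    (τ γ L : ℝ) (hτ : 0 ≤ τ) (hγ : 0 ≤ γ)
    (J : EuclideanSpace ℝ (Fin N) →
      EuclideanSpace ℝ (Fin N) →L[ℝ] EuclideanSpace ℝ (Fin N))
    (hJlip : ∀ a b, ‖J a - J b‖ ≤ L * ‖a - b‖)
    (x1 x2 v1 v2 : EuclideanSpace ℝ (Fin N)) (hv1 : ‖v1‖ = 1) (hv2 : ‖v2‖ = 1) :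
    ‖(v1 + (τ * γ) • (J x1 v1 - ⟪v1, J x1 v1⟫_ℝ • v1)) -
      (v2 + (τ * γ) • (J x2 v2 - ⟪v2, J x2 v2⟫_ℝ • v2))‖
      ≤ (1 + 2 * τ * γ * (‖J x1‖ + ‖J x2‖)) * ‖v1 - v2‖ + 2 * τ * γ * L * ‖x1 - x2‖ := by
  have hc : 0 ≤ τ * γ := mul_nonneg hτ hγ
  have hres : ‖eigenResidual (J x1) v1 - eigenResidual (J x2) v2‖
      ≤ 2 * (‖J x1‖ + ‖J x2‖) * ‖v1 - v2‖ + 2 * (L * ‖x1 - x2‖) :=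
    (norm_eigenResidual_sub_eigenResidual_le hv1 hv2).trans (by gcongr; exact hJlip x1 x2)
  calc _ = ‖(v1 - v2) + (τ * γ) • (eigenResidual (J x1) v1 - eigenResidual (J x2) v2)‖ := by
        unfold eigenResidual; congr 1; module
    _ ≤ ‖v1 - v2‖ + τ * γ * ‖eigenResidual (J x1) v1 - eigenResidual (J x2) v2‖ := by
        simpa only [norm_smul_of_nonneg hc] using norm_add_le (v1 - v2)
          ((τ * γ) • (eigenResidual (J x1) v1 - eigenResidual (J x2) v2))
    _ ≤ ‖v1 - v2‖ + τ * γ * (2 * (‖J x1‖ + ‖J x2‖) * ‖v1 - v2‖ + 2 * (L * ‖x1 - x2‖)) := by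
        gcongr
    _ = _ := by ring

/-- One-step stability estimate for the un-normalized direction update of the
explicit Euler scheme for index-1 saddle dynamics (part of the proof of Theorem 3.2). -/
theorem one_step_direction_stability_euler_1SD (N : ℕ) (hN : 1 ≤ N)
    (τ γ L : ℝ) (hτ : 0 ≤ τ) (hγ : 0 ≤ γ) (hL : 0 < L)
    (J : EuclideanSpace ℝ (Fin N) →
      EuclideanSpace ℝ (Fin N) →L[ℝ] EuclideanSpace ℝ (Fin N))
    (hJlip : ∀ a b, ‖J a - J b‖ ≤ L * ‖a - b‖)
    (x1 x2 v1 v2 : EuclideanSpace ℝ (Fin N)) (hv1 : ‖v1‖ = 1) (hv2 : ‖v2‖ = 1) :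
    ‖(v1 + (τ * γ) • (J x1 v1 - ⟪v1, J x1 v1⟫_ℝ • v1)) -
      (v2 + (τ * γ) • (J x2 v2 - ⟪v2, J x2 v2⟫_ℝ • v2))‖
      ≤ (1 + 2 * τ * γ * (‖J x1‖ + ‖J x2‖)) * ‖v1 - v2‖ + 2 * τ * γ * L * ‖x1 - x2‖ :=
  one_step_direction_stability_euler_1SD_general N τ γ L hτ hγ J hJlip x1 x2 v1 v2 hv1 hv2
end

section
/- Let N ≥ 1, T, β, L, C₀ > 0, and let F : ℝ^N → ℝ^N satisfy ‖F(a) - F(b)‖ ≤ L‖a - b‖ and ‖F(y)‖ ≤ L(1 + ‖y‖). Let x : ℝ → ℝ^N and v : ℝ → ℝ^N satisfy ‖v(t)‖ = 1 on [0,T] and the index-1 saddle dynamics x'(t) = β(I - 2 v(t)v(t)ᵀ)F(x(t)) on [0,T]. Then there exists Q > 0, depending only on β, L, T, C₀ and ‖x(0)‖ (and not on the time step), such that: for every positive integer N_T, setting τ = T/N_T and t_n = nτ, if (x_n)_{n=0}^{N_T}, (v_n)_{n=0}^{N_T} are sequences in ℝ^N with x_0 = x(0), v_0 = v(0), ‖v_n‖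 = 1 for all n, x_n = x_{n-1} + τ β (I - 2 v_{n-1} v_{n-1}ᵀ) F(x_{n-1}) for 1 ≤ n ≤ N_T, and the truncation bound ‖x(t_n) - x(t_{n-1}) - τ β (I - 2 v(t_{n-1})v(t_{n-1})ᵀ) F(x(t_{n-1}))‖ ≤ C₀ τ² holds for 1 ≤ n ≤ N_T, then ‖x(t_n) - x_n‖ ≤ Q τ ∑_{m=1}^{n-1} ‖v(t_m) - v_m‖ + Q τ for all 1 ≤ n ≤ N_T. -/
/-!
The reflections `I - 2wwᵀ` with `‖w‖ = 1` are isometries, so one explicit Euler step is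
`(1 + τβL)`-Lipschitz in the position, and replacing the unit vector `w` by `u` moves the step by
at most `4τβ‖F‖‖w - u‖`. Hence the errors `eₘ = ‖x(tₘ) - xₘ‖` obey
`eₘ₊₁ ≤ (1 + τβL) eₘ + 4τβ‖F(x(tₘ))‖ ‖v(tₘ) - vₘ‖ + C₀τ²`, and the discrete Grönwall inequality
gives the bound. The factor `‖F(x(tₘ))‖` is controlled through the linear growth of `F` and a
bound on `‖x(tₘ)‖`, which comes from the same Grönwall argument applied to the defect inequality.
-/

open scoped InnerProductSpace
open Finset Real

theorem discrete_gronwall_of_forall_lt {u b c : ℕ → ℝ} {n : ℕ} (hu : ∀ k, 0 ≤ u k)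
    (hrec : ∀ k < n, u (k + 1) ≤ (1 + c k) * u k + b k) (hc : ∀ k, 0 ≤ c k)
    (hb : ∀ k, 0 ≤ b k) :
    u n ≤ (u 0 + ∑ k ∈ range n, b k) * exp (∑ k ∈ range n, c k) := by
  -- Freezing `u` at time `n` makes the recursion hold for every `k`, as `discrete_gronwall` wants.
  have hstop : ∀ k, u (min (k + 1) n) ≤ (1 + c k) * u (min k n) + b k := by
    intro k
    rcases lt_or_ge k n with hk | hk
    · rw [min_eq_left hk, min_eq_left hk.le]; exact hrec k hk
    · rw [min_eq_right hk, min_eq_right (by omega)]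
      nlinarith [mul_nonneg (hc k) (hu n), hb k]
  have h := discrete_gronwall (u := fun k => u (min k n)) (hu _) (fun k _ => hstop k)
    (fun k _ => hc k) (fun k _ => hb k) (Nat.zero_le n)
  simpa only [min_self, Nat.zero_min, ← range_eq_Ico] using h

theorem sum_range_eq_sum_Icc_of_eq_zero {M : Type*} [AddCommMonoid M] {f : ℕ → M}
    (hf : f 0 = 0) (n : ℕ) :
    ∑ k ∈ range n, f k = ∑ k ∈ Icc 1 (n - 1), f k := by
  cases n with
  | zero => simp
  | succ n =>
    rw [sum_range_succ', hf, add_zero, ← Finset.Ico_add_one_right_eq_Icc, sum_Ico_eq_sum_range]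
    simp [add_comm]

section EulerScheme

variable {E : Type*} [NormedAddCommGroup E] [InnerProductSpace ℝ E]

def householder (w y : E) : E := y - (2 * ⟪w, y⟫_ℝ) • w

theorem householder_eq_reflection {w : E} (hw : ‖w‖ = 1) (y : E) :
    householder w y = (ℝ ∙ w)ᗮ.reflection y := by
  rw [Submodule.reflection_orthogonal_apply, Submodule.reflection_singleton_apply, hw, householder]
  simp only [RCLike.ofReal_real_eq_id, id_eq, one_pow, div_one, neg_sub, sub_right_inj]
  module

theorem norm_householder {w : E} (hw : ‖w‖ = 1) (y : E) : ‖householder w y‖ = ‖y‖ := by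
  rw [householder_eq_reflection hw, LinearIsometryEquiv.norm_map]

theorem norm_householder_sub_householder_le {w u : E} (hw : ‖w‖ = 1) (hu : ‖u‖ = 1) (y : E) :
    ‖householder w y - householder u y‖ ≤ 4 * ‖y‖ * ‖w - u‖ := by
  have hid : householder w y - householder u y
      = (2 * ⟪u, y⟫_ℝ) • (u - w) + (2 * ⟪u - w, y⟫_ℝ) • w := by
    simp only [householder, inner_sub_left]; module
  grw [hid, norm_add_le, norm_smul, norm_smul, norm_mul, norm_mul, norm_inner_le_norm,
    norm_inner_le_norm, hu, hw, norm_sub_rev u w, Real.norm_two]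
  linarith

theorem norm_householder_sub_le {w u : E} (hw : ‖w‖ = 1) (hu : ‖u‖ = 1) (a b : E) :
    ‖householder w a - householder u b‖ ≤ ‖a - b‖ + 4 * ‖a‖ * ‖w - u‖ := by
  have hlin : householder u a - householder u b = householder u (a - b) := by
    simp only [householder_eq_reflection hu, map_sub]
  calc ‖householder w a - householder u b‖
      = ‖householder u (a - b) + (householder w a - householder u a)‖ := by
        rw [← hlin]; congr 1; abel
    _ ≤ ‖a - b‖ + 4 * ‖a‖ * ‖w - u‖ := by
        grw [norm_add_le, norm_householder hu, norm_householder_sub_householder_le hw hu]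

variable {F : E → E} {L h δ β τ C₀ T K : ℝ} {y w X V : ℕ → E} {n : ℕ}

theorem norm_le_of_euler_defect_le {a b w : E} (hw : ‖w‖ = 1) (hFa : ‖F a‖ ≤ L * (1 + ‖a‖))
    (hh : 0 ≤ h) (hdef : ‖b - a - h • householder w (F a)‖ ≤ δ) :
    ‖b‖ ≤ (1 + h * L) * ‖a‖ + (h * L + δ) := by
  calc ‖b‖ = ‖(b - a - h • householder w (F a)) + a + h • householder w (F a)‖ := by
        congr 1; abel
    _ ≤ δ + ‖a‖ + h * ‖F a‖ := by
        grw [norm_add₃_le, hdef, norm_smul, norm_householder hw, Real.norm_of_nonneg hh]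
    _ ≤ (1 + h * L) * ‖a‖ + (h * L + δ) := by
        grw [hFa]; linarith

theorem norm_sub_euler_step_le {a b A w u : E} (hw : ‖w‖ = 1) (hu : ‖u‖ = 1)
    (hlip : ‖F a - F A‖ ≤ L * ‖a - A‖) (hh : 0 ≤ h)
    (hdef : ‖b - a - h • householder w (F a)‖ ≤ δ) :
    ‖b - (A + h • householder u (F A))‖ ≤
      (1 + h * L) * ‖a - A‖ + (4 * h * ‖F a‖ * ‖w - u‖ + δ) := by
  calc ‖b - (A + h • householder u (F A))‖
      = ‖(b - a - h • householder w (F a)) + (a - A)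
          + h • (householder w (F a) - householder u (F A))‖ := by
        congr 1; simp only [smul_sub]; abel
    _ ≤ δ + ‖a - A‖ + h * (‖F a - F A‖ + 4 * ‖F a‖ * ‖w - u‖) := by
        grw [norm_add₃_le, hdef, norm_smul, Real.norm_of_nonneg hh,
          norm_householder_sub_le hw hu]
    _ ≤ (1 + h * L) * ‖a - A‖ + (4 * h * ‖F a‖ * ‖w - u‖ + δ) := by
        grw [hlip]; linarith

theorem norm_le_of_euler_defect (hβ : 0 ≤ β) (hτ : 0 ≤ τ) (hL : 0 ≤ L) (hC₀ : 0 ≤ C₀)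
    (hF : ∀ a, ‖F a‖ ≤ L * (1 + ‖a‖)) (hw : ∀ m < n, ‖w m‖ = 1)
    (hdef : ∀ m < n, ‖y (m + 1) - y m - (τ * β) • householder (w m) (F (y m))‖ ≤ C₀ * τ ^ 2)
    (hτT : τ ≤ T) (hnT : n * τ ≤ T) :
    ‖y n‖ ≤ (‖y 0‖ + β * L * T + C₀ * T ^ 2) * exp (β * L * T) := by
  have hrec : ∀ m < n, ‖y (m + 1)‖ ≤ (1 + τ * β * L) * ‖y m‖ + (τ * β * L + C₀ * τ ^ 2) :=
    fun m hm => norm_le_of_euler_defect_le (hw m hm) (hF _) (by positivity) (hdef m hm)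
  have h := discrete_gronwall_of_forall_lt (fun k => norm_nonneg (y k)) hrec
    (fun _ => by positivity) (fun _ => by positivity)
  simp only [sum_const, card_range, nsmul_eq_mul] at h
  have hT : 0 ≤ T := hτ.trans hτT
  have hnτ : 0 ≤ n * τ := by positivity
  have hsum : n * (τ * β * L + C₀ * τ ^ 2) ≤ β * L * T + C₀ * T ^ 2 :=
    calc n * (τ * β * L + C₀ * τ ^ 2) = β * L * (n * τ) + C₀ * τ * (n * τ) := by ring
      _ ≤ β * L * T + C₀ * T * T := by gcongr
      _ = β * L * T + C₀ * T ^ 2 := by ring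
  have hexp : n * (τ * β * L) ≤ β * L * T :=
    calc n * (τ * β * L) = β * L * (n * τ) := by ring
      _ ≤ β * L * T := by gcongr
  exact h.trans (mul_le_mul (by linarith) (exp_le_exp.2 hexp) (exp_pos _).le (by positivity))

theorem norm_sub_le_of_euler_scheme (hβ : 0 ≤ β) (hτ : 0 ≤ τ) (hL : 0 ≤ L) (hC₀ : 0 ≤ C₀)
    (hK : 0 ≤ K) (hlip : ∀ a b, ‖F a - F b‖ ≤ L * ‖a - b‖) (hFy : ∀ m < n, ‖F (y m)‖ ≤ K)
    (hw : ∀ m < n, ‖w m‖ = 1) (hV : ∀ m < n, ‖V m‖ = 1)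
    (hX : ∀ m < n, X (m + 1) = X m + (τ * β) • householder (V m) (F (X m)))
    (hdef : ∀ m < n, ‖y (m + 1) - y m - (τ * β) • householder (w m) (F (y m))‖ ≤ C₀ * τ ^ 2)
    (hX0 : X 0 = y 0) (hnT : n * τ ≤ T) :
    ‖y n - X n‖ ≤ τ * (4 * β * K * ∑ k ∈ range n, ‖w k - V k‖ + C₀ * T) * exp (β * L * T) := by
  have hrec : ∀ m < n, ‖y (m + 1) - X (m + 1)‖ ≤
      (1 + τ * β * L) * ‖y m - X m‖ + τ * (4 * β * K * ‖w m - V m‖ + C₀ * τ) := by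
    intro m hm
    rw [hX m hm]
    refine (norm_sub_euler_step_le (hw m hm) (hV m hm) (hlip _ _) (by positivity)
      (hdef m hm)).trans ?_
    have := mul_le_mul_of_nonneg_left (hFy m hm) (by positivity : 0 ≤ 4 * τ * β * ‖w m - V m‖)
    linarith
  have h := discrete_gronwall_of_forall_lt (fun k => norm_nonneg (y k - X k)) hrec
    (fun _ => by positivity) (fun _ => by positivity)
  simp only [hX0, sub_self, norm_zero, zero_add, ← mul_sum, sum_add_distrib, sum_const,
    card_range, nsmul_eq_mul] at h
  have hT : 0 ≤ T := (by positivity : (0 : ℝ) ≤ n * τ).trans hnT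
  refine h.trans ?_
  gcongr ?_ * exp ?_
  · gcongr
  · calc τ * β * (n * L) = β * L * (n * τ) := by ring
      _ ≤ β * L * T := by gcongr

end EulerScheme

theorem position_error_bound_euler_1SD_general (N : ℕ)
    (T β L C₀ : ℝ) (hT : 0 < T) (hβ : 0 < β) (hL : 0 < L) (hC₀ : 0 < C₀)
    (F : EuclideanSpace ℝ (Fin N) → EuclideanSpace ℝ (Fin N))
    (hFlip : ∀ a b, ‖F a - F b‖ ≤ L * ‖a - b‖)
    (hFg : ∀ y, ‖F y‖ ≤ L * (1 + ‖y‖))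
    (x v : ℝ → EuclideanSpace ℝ (Fin N))
    (hv : ∀ t ∈ Set.Icc (0:ℝ) T, ‖v t‖ = 1) :
    ∃ Q : ℝ, 0 < Q ∧
      ∀ (NT : ℕ), 0 < NT → ∀ τ : ℝ, τ = T / NT →
        ∀ (X V : ℕ → EuclideanSpace ℝ (Fin N)),
          X 0 = x 0 → V 0 = v 0 →
          (∀ n ≤ NT, ‖V n‖ = 1) →
          (∀ n, 1 ≤ n → n ≤ NT →
            X n = X (n - 1) + (τ * β) •
              (F (X (n - 1)) - (2 * ⟪V (n - 1), F (X (n - 1))⟫_ℝ) • V (n - 1))) →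
          (∀ n, 1 ≤ n → n ≤ NT →
            ‖x ((n:ℝ) * τ) - x (((n - 1 : ℕ) : ℝ) * τ) - (τ * β) •
              (F (x (((n - 1 : ℕ) : ℝ) * τ)) -
                (2 * ⟪v (((n - 1 : ℕ) : ℝ) * τ), F (x (((n - 1 : ℕ) : ℝ) * τ))⟫_ℝ) •
                  v (((n - 1 : ℕ) : ℝ) * τ))‖ ≤ C₀ * τ ^ 2) →
          ∀ n, 1 ≤ n → n ≤ NT →
            ‖x ((n:ℝ) * τ) - X n‖ ≤
              Q * τ * (∑ m ∈ Finset.Icc 1 (n - 1), ‖v ((m:ℝ) * τ) - V m‖) + Q * τ := by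
  have hM : 0 ≤ (‖x 0‖ + β * L * T + C₀ * T ^ 2) * exp (β * L * T) := by positivity
  set M := (‖x 0‖ + β * L * T + C₀ * T ^ 2) * exp (β * L * T)
  refine ⟨(4 * β * (L * (1 + M)) + C₀ * T) * exp (β * L * T), by positivity, ?_⟩
  intro NT hNT τ hτ X V hX0 hV0 hVn hXrec htr n hn1 hnNT
  have hτ0 : 0 < τ := hτ ▸ by positivity
  have hgrid : ∀ m ≤ NT, (m : ℝ) * τ ≤ T := fun m hm =>
    calc (m : ℝ) * τ ≤ NT * τ := by gcongr
      _ = T := by rw [hτ]; field_simp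
  have hunit : ∀ m ≤ NT, ‖v (m * τ)‖ = 1 := fun m hm => hv _ ⟨by positivity, hgrid m hm⟩
  have hstep : ∀ m < NT, X (m + 1) = X m + (τ * β) • householder (V m) (F (X m)) :=
    fun m hm => by have h := hXrec (m + 1) (by omega) hm; rwa [Nat.add_sub_cancel] at h
  have hdef : ∀ m < NT, ‖x (((m + 1 : ℕ) : ℝ) * τ) - x (m * τ) -
      (τ * β) • householder (v (m * τ)) (F (x (m * τ)))‖ ≤ C₀ * τ ^ 2 :=
    fun m hm => by have h := htr (m + 1) (by omega) hm; rwa [Nat.add_sub_cancel] at h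
  have hbound : ∀ m ≤ NT, ‖x (m * τ)‖ ≤ M := fun m hm => by
    simpa using norm_le_of_euler_defect (y := fun m => x (m * τ)) (n := m) hβ.le hτ0.le hL.le
      hC₀.le hFg (fun k hk => hunit k (by omega)) (fun k hk => hdef k (by omega))
      (by simpa using hgrid 1 hNT) (hgrid m hm)
  have herr := norm_sub_le_of_euler_scheme (y := fun m => x (m * τ)) (w := fun m => v (m * τ))
    (n := n) (K := L * (1 + M)) hβ.le hτ0.le hL.le hC₀.le (by positivity) hFlip
    (fun m hm => (hFg _).trans (by gcongr; exact hbound m (by omega)))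
    (fun m hm => hunit m (by omega)) (fun m hm => hVn m (by omega))
    (fun m hm => hstep m (by omega)) (fun m hm => hdef m (by omega)) (by simpa using hX0)
    (hgrid n hnNT)
  rw [sum_range_eq_sum_Icc_of_eq_zero (by simp [hV0])] at herr
  refine herr.trans ?_
  have hS : 0 ≤ ∑ k ∈ Icc 1 (n - 1), ‖v (k * τ) - V k‖ := by positivity
  have hτE : 0 ≤ τ * exp (β * L * T) := by positivity
  nlinarith [mul_nonneg (mul_nonneg (by positivity : 0 ≤ C₀ * T) hτE) hS,
    mul_nonneg (by positivity : 0 ≤ 4 * β * (L * (1 + M))) hτE]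

/-- Theorem 3.1 of the paper: the position error of the explicit Euler scheme for
index-1 saddle dynamics is bounded by Qτ∑‖e^v_m‖ + Qτ. -/
theorem position_error_bound_euler_1SD (N : ℕ) (hN : 1 ≤ N)
    (T β L C₀ : ℝ) (hT : 0 < T) (hβ : 0 < β) (hL : 0 < L) (hC₀ : 0 < C₀)
    (F : EuclideanSpace ℝ (Fin N) → EuclideanSpace ℝ (Fin N))
    (hFlip : ∀ a b, ‖F a - F b‖ ≤ L * ‖a - b‖)
    (hFg : ∀ y, ‖F y‖ ≤ L * (1 + ‖y‖))
    (x v : ℝ → EuclideanSpace ℝ (Fin N))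
    (hv : ∀ t ∈ Set.Icc (0:ℝ) T, ‖v t‖ = 1)
    (hx : ∀ t ∈ Set.Icc (0:ℝ) T,
      HasDerivWithinAt x
        (β • (F (x t) - (2 * ⟪v t, F (x t)⟫_ℝ) • v t)) (Set.Icc (0:ℝ) T) t) :
    ∃ Q : ℝ, 0 < Q ∧
      ∀ (NT : ℕ), 0 < NT → ∀ τ : ℝ, τ = T / NT →
        ∀ (X V : ℕ → EuclideanSpace ℝ (Fin N)),
          X 0 = x 0 → V 0 = v 0 →
          (∀ n ≤ NT, ‖V n‖ = 1) →
          (∀ n, 1 ≤ n → n ≤ NT →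
            X n = X (n - 1) + (τ * β) •
              (F (X (n - 1)) - (2 * ⟪V (n - 1), F (X (n - 1))⟫_ℝ) • V (n - 1))) →
          (∀ n, 1 ≤ n → n ≤ NT →
            ‖x ((n:ℝ) * τ) - x (((n - 1 : ℕ) : ℝ) * τ) - (τ * β) •
              (F (x (((n - 1 : ℕ) : ℝ) * τ)) -
                (2 * ⟪v (((n - 1 : ℕ) : ℝ) * τ), F (x (((n - 1 : ℕ) : ℝ) * τ))⟫_ℝ) •
                  v (((n - 1 : ℕ) : ℝ) * τ))‖ ≤ C₀ * τ ^ 2) →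
          ∀ n, 1 ≤ n → n ≤ NT →
            ‖x ((n:ℝ) * τ) - X n‖ ≤
              Q * τ * (∑ m ∈ Finset.Icc 1 (n - 1), ‖v ((m:ℝ) * τ) - V m‖) + Q * τ :=
  position_error_bound_euler_1SD_general N T β L C₀ hT hβ hL hC₀ F hFlip hFg x v hv
end

section
/- Let N ≥ 1 and k ≥ 1, let v_1, …, v_k ∈ ℝ^N be orthonormal, let J be a self-adjoint (symmetric) linear map from ℝ^N to ℝ^N with operator norm ‖J‖ ≤ Ĵ, let τ, γ ≥ 0, and for 1 ≤ i ≤ k set ṽ_i = v_i + τ γ (I - v_i v_iᵀ - 2 ∑_{j=1}^{i-1} v_j v_jᵀ) J v_i. Then for all 1 ≤ m < i ≤ k, |⟪ṽ_m, ṽ_i⟫| ≤ 4 k² γ² Ĵ² τ². -/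
/-!
Write ṽ_i = v_i + τγ w_i. Expanding ⟪ṽ_m, ṽ_i⟫ for m < i, the zeroth-order term ⟪v_m, v_i⟫
vanishes, and the two first-order terms are ⟪w_m, v_i⟫ = ⟪J v_m, v_i⟫ and
⟪v_m, w_i⟫ = ⟪v_m, J v_i⟫ - 2⟪v_m, J v_i⟫: the factor 2 in front of the earlier directions
makes them cancel once J is symmetric. What is left is (τγ)²⟪w_m, w_i⟫, and each w_i has norm
at most 2k‖J‖ by the triangle inequality.
-/

open scoped InnerProductSpace
open Finset

lemma norm_inner_apply_smul_le {E : Type*} [NormedAddCommGroup E] [InnerProductSpace ℝ E]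
    {x y : E} (hx : ‖x‖ = 1) (hy : ‖y‖ = 1) (J : E →L[ℝ] E) :
    ‖⟪x, J y⟫_ℝ • x‖ ≤ ‖J‖ := by
  rw [norm_smul, hx, mul_one, Real.norm_eq_abs]
  calc |⟪x, J y⟫_ℝ| ≤ ‖x‖ * ‖J y‖ := abs_real_inner_le_norm _ _
    _ ≤ ‖J‖ := by simpa [hx, hy] using J.le_opNorm y

section SaddleDirection

variable {ι E : Type*} [LinearOrder ι] [LocallyFiniteOrderBot ι]
  [NormedAddCommGroup E] [InnerProductSpace ℝ E]

/-- `(I - v_i v_iᵀ - 2 ∑_{j<i} v_j v_jᵀ) J v_i`. -/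
noncomputable def saddleDirection (v : ι → E) (J : E →L[ℝ] E) (i : ι) : E :=
  J (v i) - ⟪v i, J (v i)⟫_ℝ • v i - (2 : ℝ) • ∑ j ∈ Iio i, ⟪v j, J (v i)⟫_ℝ • v j

lemma norm_saddleDirection_le {v : ι → E} (hv : Orthonormal ℝ v) (J : E →L[ℝ] E) (i : ι) :
    ‖saddleDirection v J i‖ ≤ 2 * (#(Iio i) + 1) * ‖J‖ := by
  have hJv : ‖J (v i)‖ ≤ ‖J‖ := by simpa [hv.1 i] using J.le_opNorm (v i)
  have hsum : ‖∑ j ∈ Iio i, ⟪v j, J (v i)⟫_ℝ • v j‖ ≤ #(Iio i) * ‖J‖ := by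
    simpa using norm_sum_le_of_le (Iio i) fun j _ ↦ norm_inner_apply_smul_le (hv.1 j) (hv.1 i) J
  have hdiag := norm_inner_apply_smul_le (hv.1 i) (hv.1 i) J
  calc ‖saddleDirection v J i‖
      ≤ ‖J (v i)‖ + ‖⟪v i, J (v i)⟫_ℝ • v i‖ + 2 * ‖∑ j ∈ Iio i, ⟪v j, J (v i)⟫_ℝ • v j‖ := by
        refine (norm_sub_le _ _).trans ?_
        rw [norm_smul, Real.norm_two]
        gcongr
        exact norm_sub_le _ _
    _ ≤ 2 * (#(Iio i) + 1) * ‖J‖ := by linarith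

lemma inner_saddleDirection_right_of_lt {v : ι → E} (hv : Orthonormal ℝ v) (J : E →L[ℝ] E)
    {m i : ι} (hmi : m < i) :
    ⟪v m, saddleDirection v J i⟫_ℝ = -⟪v m, J (v i)⟫_ℝ := by
  rw [saddleDirection, inner_sub_right, inner_sub_right, real_inner_smul_right,
    real_inner_smul_right, hv.inner_right_sum _ (mem_Iio.mpr hmi), hv.2 hmi.ne]
  ring

lemma inner_saddleDirection_left_of_lt {v : ι → E} (hv : Orthonormal ℝ v) {J : E →L[ℝ] E}
    (hJ : (J : E →ₗ[ℝ] E).IsSymmetric) {m i : ι} (hmi : m < i) :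
    ⟪saddleDirection v J m, v i⟫_ℝ = ⟪v m, J (v i)⟫_ℝ := by
  have hsum : ⟪∑ j ∈ Iio m, ⟪v j, J (v m)⟫_ℝ • v j, v i⟫_ℝ = 0 := by
    rw [sum_inner]
    refine sum_eq_zero fun j hj ↦ ?_
    rw [real_inner_smul_left, hv.2 ((mem_Iio.mp hj).trans hmi).ne, mul_zero]
  rw [saddleDirection, inner_sub_left, inner_sub_left, real_inner_smul_left,
    real_inner_smul_left, hsum, hv.2 hmi.ne]
  simpa using hJ (v m) (v i)

lemma inner_add_smul_saddleDirection_of_lt {v : ι → E} (hv : Orthonormal ℝ v) {J : E →L[ℝ] E}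
    (hJ : (J : E →ₗ[ℝ] E).IsSymmetric) (t : ℝ) {m i : ι} (hmi : m < i) :
    ⟪v m + t • saddleDirection v J m, v i + t • saddleDirection v J i⟫_ℝ =
      t ^ 2 * ⟪saddleDirection v J m, saddleDirection v J i⟫_ℝ := by
  rw [inner_add_left, inner_add_right, inner_add_right, real_inner_smul_left,
    real_inner_smul_left, real_inner_smul_right, real_inner_smul_right,
    inner_saddleDirection_right_of_lt hv J hmi, inner_saddleDirection_left_of_lt hv hJ hmi,
    hv.2 hmi.ne]
  ring

lemma norm_saddleDirection_le_of_fin {k : ℕ} {v : Fin k → E} (hv : Orthonormal ℝ v)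
    (J : E →L[ℝ] E) (i : Fin k) :
    ‖saddleDirection v J i‖ ≤ 2 * k * ‖J‖ := by
  refine (norm_saddleDirection_le hv J i).trans ?_
  have hi : (i : ℝ) + 1 ≤ k := by exact_mod_cast i.isLt
  rw [Fin.card_Iio]
  gcongr

end SaddleDirection

theorem cross_inner_bound_euler_kSD_general (N k : ℕ)
    (v : Fin k → EuclideanSpace ℝ (Fin N)) (hON : Orthonormal ℝ v)
    (J : EuclideanSpace ℝ (Fin N) →L[ℝ] EuclideanSpace ℝ (Fin N))
    (hJsym : ∀ a b, ⟪J a, b⟫_ℝ = ⟪a, J b⟫_ℝ)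
    (Jhat : ℝ) (hJ : ‖J‖ ≤ Jhat) (τ γ : ℝ)
    (vt : Fin k → EuclideanSpace ℝ (Fin N))
    (hvt : ∀ i, vt i = v i + (τ * γ) •
      (J (v i) - ⟪v i, J (v i)⟫_ℝ • v i -
        (2:ℝ) • ∑ j ∈ Finset.Iio i, ⟪v j, J (v i)⟫_ℝ • v j)) :
    ∀ m i : Fin k, m < i →
      |⟪vt m, vt i⟫_ℝ| ≤ 4 * (k:ℝ) ^ 2 * γ ^ 2 * Jhat ^ 2 * τ ^ 2 := by
  intro m i hmi
  set w := saddleDirection v J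
  have hw : ∀ a, ‖w a‖ ≤ 2 * k * Jhat := fun a ↦
    (norm_saddleDirection_le_of_fin hON J a).trans (by gcongr)
  have hexpand : ⟪vt m, vt i⟫_ℝ = (τ * γ) ^ 2 * ⟪w m, w i⟫_ℝ := by
    rw [hvt m, hvt i]
    exact inner_add_smul_saddleDirection_of_lt hON hJsym _ hmi
  calc |⟪vt m, vt i⟫_ℝ| = (τ * γ) ^ 2 * |⟪w m, w i⟫_ℝ| := by
        rw [hexpand, abs_mul, abs_sq]
    _ ≤ (τ * γ) ^ 2 * (‖w m‖ * ‖w i‖) := by gcongr; exact abs_real_inner_le_norm _ _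
    _ ≤ (τ * γ) ^ 2 * ((2 * k * Jhat) * (2 * k * Jhat)) := by
        gcongr
        · exact (norm_nonneg _).trans (hw m)
        · exact hw m
        · exact hw i
    _ = 4 * (k:ℝ) ^ 2 * γ ^ 2 * Jhat ^ 2 * τ ^ 2 := by ring

/-- First estimate of Lemma 4.1 of the paper: near-orthogonality of the un-normalized
direction updates of the explicit Euler scheme for index-k saddle dynamics. -/
theorem cross_inner_bound_euler_kSD (N k : ℕ) (hN : 1 ≤ N) (hk : 1 ≤ k)
    (v : Fin k → EuclideanSpace ℝ (Fin N)) (hON : Orthonormal ℝ v)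
    (J : EuclideanSpace ℝ (Fin N) →L[ℝ] EuclideanSpace ℝ (Fin N))
    (hJsym : ∀ a b, ⟪J a, b⟫_ℝ = ⟪a, J b⟫_ℝ)
    (Jhat : ℝ) (hJ : ‖J‖ ≤ Jhat) (τ γ : ℝ) (hτ : 0 ≤ τ) (hγ : 0 ≤ γ)
    (vt : Fin k → EuclideanSpace ℝ (Fin N))
    (hvt : ∀ i, vt i = v i + (τ * γ) •
      (J (v i) - ⟪v i, J (v i)⟫_ℝ • v i -
        (2:ℝ) • ∑ j ∈ Finset.Iio i, ⟪v j, J (v i)⟫_ℝ • v j)) :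
    ∀ m i : Fin k, m < i →
      |⟪vt m, vt i⟫_ℝ| ≤ 4 * (k:ℝ) ^ 2 * γ ^ 2 * Jhat ^ 2 * τ ^ 2 :=
  cross_inner_bound_euler_kSD_general N k v hON J hJsym Jhat hJ τ γ vt hvt
end

section
/- Let N ≥ 1 and k ≥ 1, let v_1, …, v_k ∈ ℝ^N be orthonormal, let J be a linear map from ℝ^N to ℝ^N with operator norm ‖J‖ ≤ Ĵ, let τ, γ ≥ 0, and for 1 ≤ i ≤ k set ṽ_i = v_i + τ γ (I - v_i v_iᵀ - 2 ∑_{j=1}^{i-1} v_j v_jᵀ) J v_i. Then for every 1 ≤ i ≤ k, |‖ṽ_i‖ - 1| ≤ |‖ṽ_i‖² - 1| ≤ (2k - 1)² γ² Ĵ² τ². -/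
/-!
Write `ṽᵢ = vᵢ + τγ w` with `w = x - ⟪vᵢ, x⟫ vᵢ - 2 Pₓ`, where `x = J vᵢ` and `Pₓ` is the orthogonal
projection of `x` onto `span {vⱼ | j < i}`. Since `x ↦ x - 2 Pₓ` is a reflection and does not change
the component along `vᵢ`, `w` is the part orthogonal to `vᵢ` of a vector of norm `‖x‖ ≤ Ĵ`.
Hence `w ⟂ vᵢ` and `‖w‖ ≤ Ĵ`, and by Pythagoras `‖ṽᵢ‖² - 1 = (τγ)² ‖w‖² ≤ (τγĴ)²`.
-/

open scoped InnerProductSpace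
open Finset

lemma abs_sub_one_le_abs_sq_sub_one_s12 {x : ℝ} (hx : 0 ≤ x) : |x - 1| ≤ |x ^ 2 - 1| := by
  rw [show x ^ 2 - 1 = (x - 1) * (x + 1) by ring, abs_mul]
  exact le_mul_of_one_le_right (abs_nonneg _) (by rw [abs_of_nonneg (by linarith)]; linarith)

section
variable {ι E : Type*} [NormedAddCommGroup E] [InnerProductSpace ℝ E]

lemma norm_sub_inner_smul_sq_of_norm_eq_one {u : E} (hu : ‖u‖ = 1) (y : E) :
    ‖y - ⟪u, y⟫_ℝ • u‖ ^ 2 = ‖y‖ ^ 2 - ⟪u, y⟫_ℝ ^ 2 := by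
  rw [norm_sub_sq_real, real_inner_smul_right, norm_smul, hu, mul_one, real_inner_comm,
    Real.norm_eq_abs, sq_abs]
  ring

lemma inner_sub_inner_smul_eq_zero_of_norm_eq_one {u : E} (hu : ‖u‖ = 1) (y : E) :
    ⟪u, y - ⟪u, y⟫_ℝ • u⟫_ℝ = 0 := by
  rw [inner_sub_right, real_inner_smul_right, real_inner_self_eq_norm_sq, hu]
  ring

namespace Orthonormal
variable {v : ι → E}

lemma norm_sub_two_smul_sum_inner_smul (hv : Orthonormal ℝ v) (s : Finset ι) (x : E) :
    ‖x - (2:ℝ) • ∑ j ∈ s, ⟪v j, x⟫_ℝ • v j‖ = ‖x‖ := by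
  set p := ∑ j ∈ s, ⟪v j, x⟫_ℝ • v j
  have hxp : ⟪x, p⟫_ℝ = ∑ j ∈ s, ⟪v j, x⟫_ℝ ^ 2 := by
    rw [inner_sum]
    refine sum_congr rfl fun j _ => ?_
    rw [real_inner_smul_right, real_inner_comm, sq]
  have hpp : ‖p‖ ^ 2 = ∑ j ∈ s, ⟪v j, x⟫_ℝ ^ 2 := by
    rw [← real_inner_self_eq_norm_sq, hv.inner_sum]
    simp only [conj_trivial, sq]
  rw [← sq_eq_sq₀ (norm_nonneg _) (norm_nonneg _), norm_sub_sq_real, real_inner_smul_right,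
    norm_smul, mul_pow, hxp, hpp, Real.norm_two]
  ring

lemma inner_sum_smul_eq_zero_of_notMem (hv : Orthonormal ℝ v) {s : Finset ι} {i : ι}
    (hi : i ∉ s) (l : ι → ℝ) : ⟪v i, ∑ j ∈ s, l j • v j⟫_ℝ = 0 := by
  rw [inner_sum]
  refine sum_eq_zero fun j hj => ?_
  rw [real_inner_smul_right, hv.2 (ne_of_mem_of_not_mem hj hi).symm, mul_zero]

/-- The reflection `x ↦ x - 2 Pₓ` in `span {v j | j ∈ s}` fixes the component along `v i`. -/
lemma sub_inner_smul_sub_two_smul_sum_eq (hv : Orthonormal ℝ v) {s : Finset ι} {i : ι}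
    (hi : i ∉ s) (x : E) :
    x - ⟪v i, x⟫_ℝ • v i - (2:ℝ) • ∑ j ∈ s, ⟪v j, x⟫_ℝ • v j =
      (x - (2:ℝ) • ∑ j ∈ s, ⟪v j, x⟫_ℝ • v j) -
        ⟪v i, x - (2:ℝ) • ∑ j ∈ s, ⟪v j, x⟫_ℝ • v j⟫_ℝ • v i := by
  rw [inner_sub_right, real_inner_smul_right, hv.inner_sum_smul_eq_zero_of_notMem hi, mul_zero,
    sub_zero, sub_right_comm]

lemma inner_sub_inner_smul_sub_two_smul_sum_eq_zero (hv : Orthonormal ℝ v) {s : Finset ι}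
    {i : ι} (hi : i ∉ s) (x : E) :
    ⟪v i, x - ⟪v i, x⟫_ℝ • v i - (2:ℝ) • ∑ j ∈ s, ⟪v j, x⟫_ℝ • v j⟫_ℝ = 0 := by
  rw [hv.sub_inner_smul_sub_two_smul_sum_eq hi]
  exact inner_sub_inner_smul_eq_zero_of_norm_eq_one (hv.1 i) _

lemma norm_sub_inner_smul_sub_two_smul_sum_le (hv : Orthonormal ℝ v) {s : Finset ι} {i : ι}
    (hi : i ∉ s) (x : E) :
    ‖x - ⟪v i, x⟫_ℝ • v i - (2:ℝ) • ∑ j ∈ s, ⟪v j, x⟫_ℝ • v j‖ ≤ ‖x‖ := by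
  rw [hv.sub_inner_smul_sub_two_smul_sum_eq hi, ← sq_le_sq₀ (norm_nonneg _) (norm_nonneg _),
    norm_sub_inner_smul_sq_of_norm_eq_one (hv.1 i), hv.norm_sub_two_smul_sum_inner_smul]
  exact sub_le_self _ (sq_nonneg _)

end Orthonormal

end

theorem norm_near_one_euler_kSD_general (N k : ℕ)
    (v : Fin k → EuclideanSpace ℝ (Fin N)) (hON : Orthonormal ℝ v)
    (J : EuclideanSpace ℝ (Fin N) →L[ℝ] EuclideanSpace ℝ (Fin N))
    (Jhat : ℝ) (hJ : ‖J‖ ≤ Jhat) (τ γ : ℝ)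
    (vt : Fin k → EuclideanSpace ℝ (Fin N))
    (hvt : ∀ i, vt i = v i + (τ * γ) •
      (J (v i) - ⟪v i, J (v i)⟫_ℝ • v i -
        (2:ℝ) • ∑ j ∈ Finset.Iio i, ⟪v j, J (v i)⟫_ℝ • v j)) :
    ∀ i : Fin k,
      |‖vt i‖ - 1| ≤ |‖vt i‖ ^ 2 - 1| ∧
      |‖vt i‖ ^ 2 - 1| ≤ (2 * (k:ℝ) - 1) ^ 2 * γ ^ 2 * Jhat ^ 2 * τ ^ 2 := by
  intro i
  set w := J (v i) - ⟪v i, J (v i)⟫_ℝ • v i - (2:ℝ) • ∑ j ∈ Iio i, ⟪v j, J (v i)⟫_ℝ • v j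
  have hw_orth : ⟪v i, w⟫_ℝ = 0 :=
    hON.inner_sub_inner_smul_sub_two_smul_sum_eq_zero notMem_Iio_self _
  have hw_le : ‖w‖ ≤ Jhat := calc
    ‖w‖ ≤ ‖J (v i)‖ := hON.norm_sub_inner_smul_sub_two_smul_sum_le notMem_Iio_self _
    _ ≤ ‖J‖ * ‖v i‖ := J.le_opNorm _
    _ ≤ Jhat := by rwa [hON.1 i, mul_one]
  have hvt_sq : ‖vt i‖ ^ 2 - 1 = (τ * γ) ^ 2 * ‖w‖ ^ 2 := by
    rw [show vt i = v i + (τ * γ) • w from hvt i, norm_add_sq_real, real_inner_smul_right,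
      hw_orth, norm_smul, hON.1 i, Real.norm_eq_abs, mul_pow, sq_abs]
    ring
  have h2k : (1:ℝ) ≤ (2 * k - 1) ^ 2 := by
    have : (1:ℝ) ≤ k := by exact_mod_cast i.pos
    nlinarith
  refine ⟨abs_sub_one_le_abs_sq_sub_one_s12 (norm_nonneg _), ?_⟩
  rw [hvt_sq, abs_of_nonneg (by positivity)]
  calc (τ * γ) ^ 2 * ‖w‖ ^ 2 ≤ (τ * γ) ^ 2 * Jhat ^ 2 := by gcongr
    _ = 1 * (γ ^ 2 * Jhat ^ 2 * τ ^ 2) := by ring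
    _ ≤ (2 * k - 1) ^ 2 * (γ ^ 2 * Jhat ^ 2 * τ ^ 2) := by gcongr
    _ = (2 * k - 1) ^ 2 * γ ^ 2 * Jhat ^ 2 * τ ^ 2 := by ring

/-- Second estimate of Lemma 4.1 of the paper: the norms of the un-normalized
direction updates of the explicit Euler scheme for index-k saddle dynamics are
quadratically close to 1. -/
theorem norm_near_one_euler_kSD (N k : ℕ) (hN : 1 ≤ N) (hk : 1 ≤ k)
    (v : Fin k → EuclideanSpace ℝ (Fin N)) (hON : Orthonormal ℝ v)
    (J : EuclideanSpace ℝ (Fin N) →L[ℝ] EuclideanSpace ℝ (Fin N))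
    (Jhat : ℝ) (hJ : ‖J‖ ≤ Jhat) (τ γ : ℝ) (hτ : 0 ≤ τ) (hγ : 0 ≤ γ)
    (vt : Fin k → EuclideanSpace ℝ (Fin N))
    (hvt : ∀ i, vt i = v i + (τ * γ) •
      (J (v i) - ⟪v i, J (v i)⟫_ℝ • v i -
        (2:ℝ) • ∑ j ∈ Finset.Iio i, ⟪v j, J (v i)⟫_ℝ • v j)) :
    ∀ i : Fin k,
      |‖vt i‖ - 1| ≤ |‖vt i‖ ^ 2 - 1| ∧
      |‖vt i‖ ^ 2 - 1| ≤ (2 * (k:ℝ) - 1) ^ 2 * γ ^ 2 * Jhat ^ 2 * τ ^ 2 :=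
  norm_near_one_euler_kSD_general N k v hON J Jhat hJ τ γ vt hvt
end

section
/- Let N ≥ 1, k ≥ 1, τ > 0, and let 0 < M < G be constants. Let ṽ_1, …, ṽ_k ∈ ℝ^N satisfy |⟪ṽ_m, ṽ_i⟫| ≤ M τ² for all m ≠ i and |‖ṽ_i‖² - 1| ≤ M τ² for all i. Define v_1, …, v_k recursively by the normalized Gram–Schmidt procedure: v_i = (ṽ_i - ∑_{j=1}^{i-1} ⟪ṽ_i, v_j⟫ v_j) / ‖ṽ_i - ∑_{j=1}^{i-1} ⟪ṽ_i, v_j⟫ v_j‖, all denominators being assumed nonzero. If 1 - M τ² - τ⁴ (k-1) G² > 0 and (M + τ² (k-1) G²) / √(1 - M τ² - τ⁴ (k-1) G²) ≤ G, then |⟪ṽ_i, v_m⟫| ≤ G τ² for all 1 ≤ m < i ≤ k. -/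
open scoped InnerProductSpace

/-! The normalized residuals are orthonormal, so the residual
`w = ṽ_m - ∑_{j<m} ⟪ṽ_m, v_j⟫ v_j` satisfies `‖w‖² = ‖ṽ_m‖² - ∑_{j<m} ⟪ṽ_m, v_j⟫²` and
`⟪ṽ_i, w⟫ = ⟪ṽ_i, ṽ_m⟫ - ∑_{j<m} ⟪ṽ_m, v_j⟫ ⟪ṽ_i, v_j⟫`. By strong induction on `m`, every
inner product in these sums is at most `Gτ²` in absolute value, hence `‖w‖² ≥ 1 - Mτ² - (k-1)G²τ⁴`
and `|⟪ṽ_i, w⟫| ≤ Mτ² + (k-1)G²τ⁴`; the hypothesis on `G` says precisely that the quotient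
`|⟪ṽ_i, v_m⟫| = |⟪ṽ_i, w⟫| / ‖w‖` is then at most `Gτ²`. -/

section Residual

variable {E ι : Type*} [NormedAddCommGroup E] [InnerProductSpace ℝ E]

theorem abs_sum_mul_le_card_mul_sq {s : Finset ι} {f g : ι → ℝ} {b : ℝ}
    (hf : ∀ j ∈ s, |f j| ≤ b) (hg : ∀ j ∈ s, |g j| ≤ b) :
    |∑ j ∈ s, f j * g j| ≤ s.card * b ^ 2 := by
  calc |∑ j ∈ s, f j * g j| ≤ ∑ j ∈ s, |f j * g j| := Finset.abs_sum_le_sum_abs _ _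
    _ ≤ ∑ _j ∈ s, b ^ 2 := Finset.sum_le_sum fun j hj => by
        rw [abs_mul, sq]
        exact mul_le_mul (hf j hj) (hg j hj) (abs_nonneg _) ((abs_nonneg _).trans (hf j hj))
    _ = s.card * b ^ 2 := by rw [Finset.sum_const, nsmul_eq_mul]

theorem inner_sub_sum_inner_smul (s : Finset ι) (v : ι → E) (x y : E) :
    ⟪x, y - ∑ j ∈ s, ⟪y, v j⟫_ℝ • v j⟫_ℝ = ⟪x, y⟫_ℝ - ∑ j ∈ s, ⟪y, v j⟫_ℝ * ⟪x, v j⟫_ℝ := by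
  simp only [inner_sub_right, inner_sum, real_inner_smul_right]

theorem abs_inner_sub_sum_inner_smul_le {s : Finset ι} {v : ι → E} {x y : E} {a b : ℝ}
    (hxy : |⟪x, y⟫_ℝ| ≤ a) (hxv : ∀ j ∈ s, |⟪x, v j⟫_ℝ| ≤ b) (hyv : ∀ j ∈ s, |⟪y, v j⟫_ℝ| ≤ b) :
    |⟪x, y - ∑ j ∈ s, ⟪y, v j⟫_ℝ • v j⟫_ℝ| ≤ a + s.card * b ^ 2 := by
  rw [inner_sub_sum_inner_smul]
  exact (abs_sub _ _).trans (add_le_add hxy (abs_sum_mul_le_card_mul_sq hyv hxv))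

variable [DecidableEq ι] {s : Finset ι} {v : ι → E}

theorem inner_sub_sum_inner_smul_eq_zero
    (hv : ∀ j ∈ s, ∀ l ∈ s, ⟪v j, v l⟫_ℝ = if j = l then 1 else 0) (y : E) {j : ι}
    (hj : j ∈ s) : ⟪v j, y - ∑ l ∈ s, ⟪y, v l⟫_ℝ • v l⟫_ℝ = 0 := by
  rw [inner_sub_sum_inner_smul, Finset.sum_congr rfl fun l hl => by rw [hv j hj l hl]]
  simp [hj, real_inner_comm]

theorem norm_sub_sum_inner_smul_sq
    (hv : ∀ j ∈ s, ∀ l ∈ s, ⟪v j, v l⟫_ℝ = if j = l then 1 else 0) (y : E) :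
    ‖y - ∑ j ∈ s, ⟪y, v j⟫_ℝ • v j‖ ^ 2 = ‖y‖ ^ 2 - ∑ j ∈ s, ⟪y, v j⟫_ℝ ^ 2 := by
  have hproj : ⟪∑ j ∈ s, ⟪y, v j⟫_ℝ • v j, y - ∑ j ∈ s, ⟪y, v j⟫_ℝ • v j⟫_ℝ = 0 := by
    rw [sum_inner]
    refine Finset.sum_eq_zero fun j hj => ?_
    rw [real_inner_smul_left, inner_sub_sum_inner_smul_eq_zero hv y hj, mul_zero]
  rw [← real_inner_self_eq_norm_sq, inner_sub_left _ _ (y - _), hproj, sub_zero,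
    inner_sub_sum_inner_smul, real_inner_self_eq_norm_sq]
  simp only [sq]

theorem sub_le_norm_sub_sum_inner_smul_sq
    (hv : ∀ j ∈ s, ∀ l ∈ s, ⟪v j, v l⟫_ℝ = if j = l then 1 else 0) {y : E} {a b : ℝ}
    (hy : |‖y‖ ^ 2 - 1| ≤ a) (hyv : ∀ j ∈ s, |⟪y, v j⟫_ℝ| ≤ b) :
    1 - a - s.card * b ^ 2 ≤ ‖y - ∑ j ∈ s, ⟪y, v j⟫_ℝ • v j‖ ^ 2 := by
  have hsum : ∑ j ∈ s, ⟪y, v j⟫_ℝ ^ 2 ≤ s.card * b ^ 2 := by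
    simpa only [sq] using (le_abs_self _).trans (abs_sum_mul_le_card_mul_sq hyv hyv)
  rw [norm_sub_sum_inner_smul_sq hv]
  linarith [(abs_le.mp hy).1]

end Residual

def gramSchmidtResidual {E ι : Type*} [NormedAddCommGroup E] [InnerProductSpace ℝ E]
    [Preorder ι] [LocallyFiniteOrderBot ι] (vt v : ι → E) (i : ι) : E :=
  vt i - ∑ j ∈ Finset.Iio i, ⟪vt i, v j⟫_ℝ • v j

section GramSchmidt

variable {E ι : Type*} [NormedAddCommGroup E] [InnerProductSpace ℝ E]
  [LinearOrder ι] [LocallyFiniteOrderBot ι] [WellFoundedLT ι]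

theorem orthonormal_of_eq_normalize_gramSchmidtResidual {vt v : ι → E}
    (hden : ∀ i, gramSchmidtResidual vt v i ≠ 0)
    (hv : ∀ i, v i = ‖gramSchmidtResidual vt v i‖⁻¹ • gramSchmidtResidual vt v i) :
    Orthonormal ℝ v := by
  suffices h : ∀ i, ∀ j ≤ i, ⟪v j, v i⟫_ℝ = if j = i then 1 else 0 by
    refine orthonormal_iff_ite.mpr fun j l => ?_
    rcases le_total j l with hjl | hlj
    · exact h l j hjl
    · rw [real_inner_comm, h j l hlj]
      exact if_congr eq_comm rfl rfl
  intro i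
  induction i using WellFoundedLT.induction with
  | _ i ih =>
  intro j hji
  rcases hji.lt_or_eq with hji | rfl
  · have hprev : ∀ j ∈ Finset.Iio i, ∀ l ∈ Finset.Iio i,
        ⟪v j, v l⟫_ℝ = if j = l then 1 else 0 := by
      intro j hj l hl
      rcases le_total j l with hjl | hlj
      · exact ih l (Finset.mem_Iio.mp hl) j hjl
      · rw [real_inner_comm, ih j (Finset.mem_Iio.mp hj) l hlj]
        exact if_congr eq_comm rfl rfl
    rw [if_neg hji.ne, hv i, real_inner_smul_right, gramSchmidtResidual,
      inner_sub_sum_inner_smul_eq_zero hprev _ (Finset.mem_Iio.mpr hji), mul_zero]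
  · rw [if_pos rfl, real_inner_self_eq_norm_sq, hv j, norm_smul, norm_inv, norm_norm,
      inv_mul_cancel₀ (norm_ne_zero_iff.mpr (hden j)), one_pow]

theorem abs_inner_le_of_eq_normalize_gramSchmidtResidual {vt v : ι → E} {a b n : ℝ}
    (hcard : ∀ i : ι, ((Finset.Iio i).card : ℝ) ≤ n)
    (hcross : ∀ m i, m ≠ i → |⟪vt m, vt i⟫_ℝ| ≤ a)
    (hnorm : ∀ i, |‖vt i‖ ^ 2 - 1| ≤ a)
    (hden : ∀ i, gramSchmidtResidual vt v i ≠ 0)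
    (hv : ∀ i, v i = ‖gramSchmidtResidual vt v i‖⁻¹ • gramSchmidtResidual vt v i)
    (hpos : 0 < 1 - a - n * b ^ 2)
    (hcond : (a + n * b ^ 2) / Real.sqrt (1 - a - n * b ^ 2) ≤ b) :
    ∀ m i, m < i → |⟪vt i, v m⟫_ℝ| ≤ b := by
  have hON := orthonormal_iff_ite.mp (orthonormal_of_eq_normalize_gramSchmidtResidual hden hv)
  intro m
  induction m using WellFoundedLT.induction with
  | _ m ih =>
  intro i hmi
  set w := gramSchmidtResidual vt v m
  have hmv : ∀ j ∈ Finset.Iio m, |⟪vt m, v j⟫_ℝ| ≤ b := fun j hj =>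
    ih j (Finset.mem_Iio.mp hj) m (Finset.mem_Iio.mp hj)
  have hiv : ∀ j ∈ Finset.Iio m, |⟪vt i, v j⟫_ℝ| ≤ b := fun j hj =>
    ih j (Finset.mem_Iio.mp hj) i ((Finset.mem_Iio.mp hj).trans hmi)
  have hnum : |⟪vt i, w⟫_ℝ| ≤ a + n * b ^ 2 :=
    (abs_inner_sub_sum_inner_smul_le (hcross i m hmi.ne') hiv hmv).trans
      (by gcongr; exact hcard m)
  have hw : Real.sqrt (1 - a - n * b ^ 2) ≤ ‖w‖ := by
    refine Real.sqrt_le_iff.mpr ⟨norm_nonneg _, ?_⟩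
    refine le_trans ?_ (sub_le_norm_sub_sum_inner_smul_sq (fun j _ l _ => hON j l) (hnorm m) hmv)
    gcongr
    exact hcard m
  calc |⟪vt i, v m⟫_ℝ| = |⟪vt i, w⟫_ℝ| / ‖w‖ := by
        rw [hv m, real_inner_smul_right, abs_mul, abs_inv, abs_norm, inv_mul_eq_div]
    _ ≤ (a + n * b ^ 2) / Real.sqrt (1 - a - n * b ^ 2) :=
        div_le_div₀ ((abs_nonneg _).trans hnum) hnum (Real.sqrt_pos.mpr hpos) hw
    _ ≤ b := hcond

end GramSchmidt

theorem gram_schmidt_cross_inner_bound_general (N k : ℕ)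
    (τ M G : ℝ)
    (vt v : Fin k → EuclideanSpace ℝ (Fin N))
    (hcross : ∀ m i : Fin k, m ≠ i → |⟪vt m, vt i⟫_ℝ| ≤ M * τ ^ 2)
    (hnorm : ∀ i : Fin k, |‖vt i‖ ^ 2 - 1| ≤ M * τ ^ 2)
    (hden : ∀ i : Fin k,
      vt i - ∑ j ∈ Finset.Iio i, ⟪vt i, v j⟫_ℝ • v j ≠ 0)
    (hv : ∀ i : Fin k,
      v i = ‖vt i - ∑ j ∈ Finset.Iio i, ⟪vt i, v j⟫_ℝ • v j‖⁻¹ •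
        (vt i - ∑ j ∈ Finset.Iio i, ⟪vt i, v j⟫_ℝ • v j))
    (hpos : 0 < 1 - M * τ ^ 2 - τ ^ 4 * ((k:ℝ) - 1) * G ^ 2)
    (hcond : (M + τ ^ 2 * ((k:ℝ) - 1) * G ^ 2) /
      Real.sqrt (1 - M * τ ^ 2 - τ ^ 4 * ((k:ℝ) - 1) * G ^ 2) ≤ G) :
    ∀ m i : Fin k, m < i → |⟪vt i, v m⟫_ℝ| ≤ G * τ ^ 2 := by
  have hcard (i : Fin k) : ((Finset.Iio i).card : ℝ) ≤ k - 1 := by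
    rw [Fin.card_Iio, le_sub_iff_add_le]
    exact_mod_cast i.isLt
  have hrad : 1 - M * τ ^ 2 - ((k:ℝ) - 1) * (G * τ ^ 2) ^ 2 =
      1 - M * τ ^ 2 - τ ^ 4 * ((k:ℝ) - 1) * G ^ 2 := by ring
  refine abs_inner_le_of_eq_normalize_gramSchmidtResidual hcard hcross hnorm hden hv
    (hrad ▸ hpos) ?_
  calc (M * τ ^ 2 + ((k:ℝ) - 1) * (G * τ ^ 2) ^ 2) /
        Real.sqrt (1 - M * τ ^ 2 - ((k:ℝ) - 1) * (G * τ ^ 2) ^ 2)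
      = τ ^ 2 * ((M + τ ^ 2 * ((k:ℝ) - 1) * G ^ 2) /
        Real.sqrt (1 - M * τ ^ 2 - τ ^ 4 * ((k:ℝ) - 1) * G ^ 2)) := by
        rw [hrad]; ring
    _ ≤ τ ^ 2 * G := by gcongr
    _ = G * τ ^ 2 := mul_comm _ _

/-- Estimate (4.12) of the paper: induction bound |⟪ṽ_i, v_m⟫| ≤ Gτ² for the
normalized Gram–Schmidt orthonormalization step of the explicit Euler scheme for
index-k saddle dynamics. -/
theorem gram_schmidt_cross_inner_bound (N k : ℕ) (hN : 1 ≤ N) (hk : 1 ≤ k)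
    (τ M G : ℝ) (hτ : 0 < τ) (hM : 0 < M) (hMG : M < G)
    (vt v : Fin k → EuclideanSpace ℝ (Fin N))
    (hcross : ∀ m i : Fin k, m ≠ i → |⟪vt m, vt i⟫_ℝ| ≤ M * τ ^ 2)
    (hnorm : ∀ i : Fin k, |‖vt i‖ ^ 2 - 1| ≤ M * τ ^ 2)
    (hden : ∀ i : Fin k,
      vt i - ∑ j ∈ Finset.Iio i, ⟪vt i, v j⟫_ℝ • v j ≠ 0)
    (hv : ∀ i : Fin k,
      v i = ‖vt i - ∑ j ∈ Finset.Iio i, ⟪vt i, v j⟫_ℝ • v j‖⁻¹ •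
        (vt i - ∑ j ∈ Finset.Iio i, ⟪vt i, v j⟫_ℝ • v j))
    (hpos : 0 < 1 - M * τ ^ 2 - τ ^ 4 * ((k:ℝ) - 1) * G ^ 2)
    (hcond : (M + τ ^ 2 * ((k:ℝ) - 1) * G ^ 2) /
      Real.sqrt (1 - M * τ ^ 2 - τ ^ 4 * ((k:ℝ) - 1) * G ^ 2) ≤ G) :
    ∀ m i : Fin k, m < i → |⟪vt i, v m⟫_ℝ| ≤ G * τ ^ 2 :=
  gram_schmidt_cross_inner_bound_general N k τ M G vt v hcross hnorm hden hv hpos hcond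
end

section
/- Let N ≥ 1 and k ≥ 1, let v_1, …, v_k ∈ ℝ^N be orthonormal, let J̃ be an arbitrary (not necessarily self-adjoint) linear map from ℝ^N to ℝ^N with operator norm ‖J̃‖ ≤ Ĵ, let τ ≥ 0, and for 1 ≤ i ≤ k set ṽ_i = v_i + τ (I - v_i v_iᵀ) J̃ v_i - τ ∑_{j=1}^{i-1} v_j v_jᵀ (J̃ + J̃ᵀ) v_i, where J̃ᵀ denotes the adjoint of J̃. Then for all 1 ≤ m < i ≤ k, |⟪ṽ_m, ṽ_i⟫| ≤ 4 k² Ĵ² τ²; that is, the first-order (O(τ)) term in ⟪ṽ_m, ṽ_i⟫ vanishes. -/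
open scoped InnerProductSpace
open Finset ContinuousLinearMap

/-! Write `ṽ_i = v_i + τ A_i` with `A = ghisdDirection J̃ v`. For `m < i`, orthonormality gives
`⟪v_m, A_i⟫ = -⟪J̃ v_m, v_i⟫` (only the `j = m` term of the correction sum survives, and it contributes `J̃ + J̃ᵀ`) and
`⟪A_m, v_i⟫ = ⟪J̃ v_m, v_i⟫`, so the `O(τ)` part of `⟪ṽ_m, ṽ_i⟫` cancels and
`⟪ṽ_m, ṽ_i⟫ = τ² ⟪A_m, A_i⟫`. Each `A_i` has norm at most `2k‖J̃‖`. -/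

variable {E ι : Type*} [NormedAddCommGroup E] [InnerProductSpace ℝ E]

theorem abs_inner_apply_le_opNorm (S : E →L[ℝ] E) {u w : E} (hu : ‖u‖ = 1) (hw : ‖w‖ = 1) :
    |⟪u, S w⟫_ℝ| ≤ ‖S‖ :=
  calc |⟪u, S w⟫_ℝ| ≤ ‖u‖ * ‖S w‖ := abs_real_inner_le_norm _ _
    _ ≤ ‖S‖ := by rw [hu, one_mul]; exact S.unit_le_opNorm _ hw.le

variable [CompleteSpace E] [LinearOrder ι] [LocallyFiniteOrderBot ι]

noncomputable def ghisdDirection (T : E →L[ℝ] E) (v : ι → E) (i : ι) : E :=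
  (T (v i) - ⟪v i, T (v i)⟫_ℝ • v i) - ∑ j ∈ Iio i, ⟪v j, (T + adjoint T) (v i)⟫_ℝ • v j

section

variable {T : E →L[ℝ] E} {v : ι → E}

theorem inner_ghisdDirection_of_lt (hv : Orthonormal ℝ v) {m i : ι} (hmi : m < i) :
    ⟪v m, ghisdDirection T v i⟫_ℝ = -⟪T (v m), v i⟫_ℝ := by
  rw [ghisdDirection, inner_sub_right,
    hv.inner_right_sum (fun j => ⟪v j, (T + adjoint T) (v i)⟫_ℝ) (mem_Iio.mpr hmi)]
  simp only [inner_sub_right, real_inner_smul_right, hv.inner_eq_zero hmi.ne, mul_zero,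
    add_apply, inner_add_right, adjoint_inner_right]
  ring

theorem ghisdDirection_inner_of_lt (hv : Orthonormal ℝ v) {m i : ι} (hmi : m < i) :
    ⟪ghisdDirection T v m, v i⟫_ℝ = ⟪T (v m), v i⟫_ℝ := by
  have hsum : ∑ j ∈ Iio m, ⟪v j, (T + adjoint T) (v m)⟫_ℝ * ⟪v j, v i⟫_ℝ = 0 :=
    sum_eq_zero fun j hj => by
      rw [hv.inner_eq_zero ((mem_Iio.mp hj).trans hmi).ne, mul_zero]
  simp only [ghisdDirection, inner_sub_left, real_inner_smul_left, sum_inner, hsum,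
    hv.inner_eq_zero hmi.ne, mul_zero, sub_zero]

theorem inner_add_smul_ghisdDirection_of_lt (hv : Orthonormal ℝ v) (τ : ℝ) {m i : ι}
    (hmi : m < i) :
    ⟪v m + τ • ghisdDirection T v m, v i + τ • ghisdDirection T v i⟫_ℝ =
      τ ^ 2 * ⟪ghisdDirection T v m, ghisdDirection T v i⟫_ℝ := by
  simp only [inner_add_left, inner_add_right, real_inner_smul_left, real_inner_smul_right,
    inner_ghisdDirection_of_lt hv hmi, ghisdDirection_inner_of_lt hv hmi,
    hv.inner_eq_zero hmi.ne]
  ring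

theorem norm_ghisdDirection_le (hv : Orthonormal ℝ v) (i : ι) :
    ‖ghisdDirection T v i‖ ≤ 2 * (#(Iio i) + 1) * ‖T‖ := by
  have hfirst : ‖T (v i) - ⟪v i, T (v i)⟫_ℝ • v i‖ ≤ 2 * ‖T‖ :=
    calc ‖T (v i) - ⟪v i, T (v i)⟫_ℝ • v i‖ ≤ ‖T (v i)‖ + |⟪v i, T (v i)⟫_ℝ| := by
          simpa [norm_smul, hv.1 i] using norm_sub_le (T (v i)) (⟪v i, T (v i)⟫_ℝ • v i)
      _ ≤ ‖T‖ + ‖T‖ :=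
          add_le_add (T.unit_le_opNorm _ (hv.1 i).le) (abs_inner_apply_le_opNorm T (hv.1 i) (hv.1 i))
      _ = 2 * ‖T‖ := by ring
  have hterm : ∀ j, ‖⟪v j, (T + adjoint T) (v i)⟫_ℝ • v j‖ ≤ 2 * ‖T‖ := fun j =>
    calc ‖⟪v j, (T + adjoint T) (v i)⟫_ℝ • v j‖ = |⟪v j, (T + adjoint T) (v i)⟫_ℝ| := by
          rw [norm_smul, hv.1 j, mul_one, Real.norm_eq_abs]
      _ ≤ ‖T + adjoint T‖ := abs_inner_apply_le_opNorm _ (hv.1 j) (hv.1 i)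
      _ ≤ ‖T‖ + ‖adjoint T‖ := norm_add_le _ _
      _ = 2 * ‖T‖ := by rw [adjoint.norm_map]; ring
  have hsum : ‖∑ j ∈ Iio i, ⟪v j, (T + adjoint T) (v i)⟫_ℝ • v j‖ ≤ #(Iio i) * (2 * ‖T‖) :=
    (norm_sum_le _ _).trans <| by simpa using sum_le_card_nsmul _ _ _ fun j _ => hterm j
  calc ‖ghisdDirection T v i‖ ≤ 2 * ‖T‖ + #(Iio i) * (2 * ‖T‖) :=
        (norm_sub_le _ _).trans (add_le_add hfirst hsum)
    _ = 2 * (#(Iio i) + 1) * ‖T‖ := by ring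

end

theorem cross_inner_bound_euler_GHiSD_general (N k : ℕ)
    (v : Fin k → EuclideanSpace ℝ (Fin N)) (hON : Orthonormal ℝ v)
    (Jt : EuclideanSpace ℝ (Fin N) →L[ℝ] EuclideanSpace ℝ (Fin N))
    (Jhat : ℝ) (hJ : ‖Jt‖ ≤ Jhat) (τ : ℝ)
    (vt : Fin k → EuclideanSpace ℝ (Fin N))
    (hvt : ∀ i, vt i = v i + τ • (Jt (v i) - ⟪v i, Jt (v i)⟫_ℝ • v i) -
      τ • ∑ j ∈ Finset.Iio i,
        ⟪v j, (Jt + ContinuousLinearMap.adjoint Jt) (v i)⟫_ℝ • v j) :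
    ∀ m i : Fin k, m < i →
      |⟪vt m, vt i⟫_ℝ| ≤ 4 * (k:ℝ) ^ 2 * Jhat ^ 2 * τ ^ 2 := by
  have hvt' : ∀ i, vt i = v i + τ • ghisdDirection Jt v i := fun i => by
    rw [hvt i, ghisdDirection, smul_sub _ (_ - _), add_sub_assoc]
  have hnorm : ∀ i, ‖ghisdDirection Jt v i‖ ≤ 2 * k * Jhat := fun i => by
    have hik : ((i : ℕ) : ℝ) + 1 ≤ k := by exact_mod_cast i.isLt
    have := norm_ghisdDirection_le (T := Jt) hON i
    rw [Fin.card_Iio] at this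
    nlinarith [norm_nonneg Jt]
  intro m i hmi
  rw [hvt' m, hvt' i, inner_add_smul_ghisdDirection_of_lt hON τ hmi, abs_mul,
    abs_of_nonneg (sq_nonneg τ)]
  calc τ ^ 2 * |⟪ghisdDirection Jt v m, ghisdDirection Jt v i⟫_ℝ|
      ≤ τ ^ 2 * (‖ghisdDirection Jt v m‖ * ‖ghisdDirection Jt v i‖) := by
        gcongr; exact abs_real_inner_le_norm _ _
    _ ≤ τ ^ 2 * ((2 * k * Jhat) * (2 * k * Jhat)) := by
        gcongr
        · exact (norm_nonneg _).trans (hnorm m)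
        · exact hnorm m
        · exact hnorm i
    _ = 4 * (k:ℝ) ^ 2 * Jhat ^ 2 * τ ^ 2 := by ring

/-- The key estimate of Section 6 of the paper for the generalized high-index saddle
dynamics (GHiSD) of non-gradient systems: thanks to the symmetrization J̃ + J̃ᵀ, the
O(τ) term in ⟪ṽ_m, ṽ_i⟫ vanishes, so |⟪ṽ_m, ṽ_i⟫| = O(τ²). -/
theorem cross_inner_bound_euler_GHiSD (N k : ℕ) (hN : 1 ≤ N) (hk : 1 ≤ k)
    (v : Fin k → EuclideanSpace ℝ (Fin N)) (hON : Orthonormal ℝ v)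
    (Jt : EuclideanSpace ℝ (Fin N) →L[ℝ] EuclideanSpace ℝ (Fin N))
    (Jhat : ℝ) (hJ : ‖Jt‖ ≤ Jhat) (τ : ℝ) (hτ : 0 ≤ τ)
    (vt : Fin k → EuclideanSpace ℝ (Fin N))
    (hvt : ∀ i, vt i = v i + τ • (Jt (v i) - ⟪v i, Jt (v i)⟫_ℝ • v i) -
      τ • ∑ j ∈ Finset.Iio i,
        ⟪v j, (Jt + ContinuousLinearMap.adjoint Jt) (v i)⟫_ℝ • v j) :
    ∀ m i : Fin k, m < i →
      |⟪vt m, vt i⟫_ℝ| ≤ 4 * (k:ℝ) ^ 2 * Jhat ^ 2 * τ ^ 2 :=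
  cross_inner_bound_euler_GHiSD_general N k v hON Jt Jhat hJ τ vt hvt
end
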